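/- arXiv:2204.12132 — 10 statements merged into one kernel-verified Lean document; each statement's English description precedes it below -/
import Mathlib

section
/- Let $R$ be a commutative ring, $M$ an $R$-module, $W$ the set of non-zerodivisors on $M$, and $a,b\in W$. Let $L=\frac{M}{a}\cap\frac{M}{b}$ inside $W^{-1}M$. Then the sequence $a,b$ is $L$-regular if and only if $\frac{M}{a}\cap\frac{M}{b}=\frac{M}{a^2}\cap\frac{M}{b^2}$. -/
open Pointwise

/-- For `a, b` non-zerodivisors on `M` and
`L = M/a ∩ M/b` inside `W⁻¹M`, the sequence `a, b` is `L`-regular iff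
`M/a ∩ M/b = M/a² ∩ M/b²`. Here `M/c` is realized inside the localized module
`W⁻¹M` as the preimage of (the image of) `M` under multiplication by `c`. -/
theorem stmt0 {R : Type*} [CommRing R] {M : Type*} [AddCommGroup M] [Module R M]
    (W : Submonoid R) (hW : ∀ w : R, w ∈ W ↔ Function.Injective fun x : M => w • x)
    (a b : R) (ha : a ∈ W) (hb : b ∈ W)
    (M' : Submodule R (LocalizedModule W M))
    (hM' : M' = LinearMap.range (LocalizedModule.mkLinearMap W M))
    (L : Submodule R (LocalizedModule W M))
    (hL : L = M'.comap (LinearMap.lsmul R (LocalizedModule W M) a) ⊓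
              M'.comap (LinearMap.lsmul R (LocalizedModule W M) b)) :
    ((∀ x ∈ L, a • x = 0 → x = 0) ∧ (∀ x ∈ L, b • x ∈ a • L → x ∈ a • L)) ↔
      L = M'.comap (LinearMap.lsmul R (LocalizedModule W M) (a ^ 2)) ⊓
          M'.comap (LinearMap.lsmul R (LocalizedModule W M) (b ^ 2)) := by
  -- bijectivity of scalar multiplication by elements of `W` on the localized module
  have key : ∀ c : R, c ∈ W →
      Function.Bijective (fun x : LocalizedModule W M => c • x) := by
    intro c hc
    have h := IsLocalizedModule.map_units (LocalizedModule.mkLinearMap W M)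
      (⟨c, hc⟩ : W)
    rw [Module.End.isUnit_iff] at h
    have : (⇑(algebraMap R (Module.End R (LocalizedModule W M)) c)) =
        fun x : LocalizedModule W M => c • x := by
      funext x; exact Module.algebraMap_end_apply R R _ c x
    rwa [this] at h
  have injA : ∀ x y : LocalizedModule W M, a • x = a • y → x = y :=
    fun x y h => (key a ha).1 h
  have injB : ∀ x y : LocalizedModule W M, b • x = b • y → x = y :=
    fun x y h => (key b hb).1 h
  -- membership in L
  have memL : ∀ x : LocalizedModule W M, x ∈ L ↔ a • x ∈ M' ∧ b • x ∈ M' := by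
    intro x
    rw [hL, Submodule.mem_inf, Submodule.mem_comap, Submodule.mem_comap,
      LinearMap.lsmul_apply, LinearMap.lsmul_apply]
  have memAL : ∀ x : LocalizedModule W M, x ∈ a • L ↔ ∃ y ∈ L, a • y = x := by
    intro x
    constructor
    · intro hx
      have : x ∈ (↑(a • L) : Set (LocalizedModule W M)) := hx
      rw [Submodule.coe_pointwise_smul] at this
      exact Set.mem_smul_set.mp this
    · rintro ⟨y, hy, rfl⟩
      exact Submodule.smul_mem_pointwise_smul y a L hy
  constructor
  · rintro ⟨_, h2⟩
    apply le_antisymm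
    · intro x hx
      rw [memL] at hx
      rw [Submodule.mem_inf, Submodule.mem_comap, Submodule.mem_comap,
        LinearMap.lsmul_apply, LinearMap.lsmul_apply]
      constructor
      · have : (a ^ 2) • x = a • (a • x) := by rw [← mul_smul]; ring_nf
        rw [this]; exact Submodule.smul_mem M' a hx.1
      · have : (b ^ 2) • x = b • (b • x) := by rw [← mul_smul]; ring_nf
        rw [this]; exact Submodule.smul_mem M' b hx.2
    · intro x hx
      rw [Submodule.mem_inf, Submodule.mem_comap, Submodule.mem_comap,
        LinearMap.lsmul_apply, LinearMap.lsmul_apply] at hx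
      obtain ⟨hx1, hx2⟩ := hx
      -- z = (a*b) • x ∈ L
      have hz : (a * b) • x ∈ L := by
        rw [memL]
        constructor
        · have : a • (a * b) • x = b • (a ^ 2) • x := by
            rw [← mul_smul, ← mul_smul]; ring_nf
          rw [this]; exact Submodule.smul_mem M' b hx1
        · have : b • (a * b) • x = a • (b ^ 2) • x := by
            rw [← mul_smul, ← mul_smul]; ring_nf
          rw [this]; exact Submodule.smul_mem M' a hx2
      -- b² • x ∈ L
      have hb2 : (b ^ 2) • x ∈ L := by
        rw [memL]
        constructor
        · have : a • (b ^ 2) • x = b • (a * b) • x := by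
            rw [← mul_smul, ← mul_smul]; ring_nf
          rw [this]
          exact ((memL _).mp hz).2
        · exact Submodule.smul_mem M' b hx2
      -- b • z ∈ a • L, hence z ∈ a • L
      have hbz : b • (a * b) • x ∈ a • L := by
        rw [memAL]
        exact ⟨(b ^ 2) • x, hb2, by rw [← mul_smul, ← mul_smul]; ring_nf⟩
      obtain ⟨l, hl, hal⟩ := (memAL _).mp (h2 _ hz hbz)
      -- b • x = l ∈ L
      have hbx : b • x ∈ L := by
        have : a • (b • x) = a • l := by
          rw [← mul_smul]; rw [← hal]
        rw [injA _ _ this]; exact hl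
      -- a • x ∈ L
      have hax : a • x ∈ L := by
        rw [memL]
        constructor
        · have : a • a • x = (a ^ 2) • x := by rw [← mul_smul]; ring_nf
          rw [this]; exact hx1
        · have : b • a • x = a • (b • x) := by rw [← mul_smul, ← mul_smul]; ring_nf
          rw [this]; exact ((memL _).mp hbx).1
      have hbax : b • (a • x) ∈ a • L := by
        rw [memAL]
        exact ⟨b • x, hbx, by rw [← mul_smul, ← mul_smul]; ring_nf⟩
      obtain ⟨l', hl', hal'⟩ := (memAL _).mp (h2 _ hax hbax)
      rw [injA _ _ hal'.symm]; exact hl'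
  · intro hEq
    constructor
    · intro x _ hx
      have : a • x = a • (0 : LocalizedModule W M) := by rw [hx, smul_zero]
      exact injA _ _ this
    · intro x hx hbx
      obtain ⟨y, hy, hay⟩ := (memAL _).mp hbx
      obtain ⟨w, hw0⟩ := (key a ha).2 x
      have hw : a • w = x := hw0
      have hwL : w ∈ L := by
        rw [hEq, Submodule.mem_inf, Submodule.mem_comap, Submodule.mem_comap,
          LinearMap.lsmul_apply, LinearMap.lsmul_apply]
        constructor
        · have : (a ^ 2) • w = a • x := by rw [← hw, ← mul_smul]; ring_nf
          rw [this]; exact ((memL _).mp hx).1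
        · have : b • (b ^ 2) • w = b • (b • y) := by
            have h1 : b • (b ^ 2) • w = (b ^ 2) • (b • w) := by
              rw [← mul_smul, ← mul_smul]; ring_nf
            have h2 : a • (b • w) = a • y := by
              rw [← mul_smul, mul_comm, mul_smul, hw, ← hay]
            rw [h1, injA _ _ h2, ← mul_smul, pow_two]
          rw [injB _ _ this]
          exact ((memL _).mp hy).2
      exact (memAL _).mpr ⟨w, hwL, hw⟩
end

section
/- Let $R$ be a commutative ring and $a,b$ non-zerodivisors of $R$ such that $\frac{R}{a}\cap\frac{R}{b}=\frac{R}{a^2}\cap\frac{R}{b^2}$ inside the total quotient ring $\mathrm{Q}(R)$. Then $\frac{R}{a}\cap\frac{R}{b}$ is a subring of $\mathrm{Q}(R)$. -/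
/-- if `R/a ∩ R/b = R/a² ∩ R/b²` inside the total quotient ring
`Q(R)`, then `R/a ∩ R/b` is a subring of `Q(R)`. Here `R/c` is realized as the
preimage of (the image of) `R` in `Q(R)` under multiplication by `c`. -/
theorem stmt1 {R : Type*} [CommRing R] (a b : R)
    (ha : a ∈ nonZeroDivisors R) (hb : b ∈ nonZeroDivisors R)
    (RR : Submodule R (FractionRing R))
    (hRR : RR = LinearMap.range (Algebra.linearMap R (FractionRing R)))
    (h : RR.comap (LinearMap.lsmul R (FractionRing R) a) ⊓
           RR.comap (LinearMap.lsmul R (FractionRing R) b) =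
         RR.comap (LinearMap.lsmul R (FractionRing R) (a ^ 2)) ⊓
           RR.comap (LinearMap.lsmul R (FractionRing R) (b ^ 2))) :
    ∃ S : Subring (FractionRing R),
      (S : Set (FractionRing R)) =
        ↑(RR.comap (LinearMap.lsmul R (FractionRing R) a) ⊓
            RR.comap (LinearMap.lsmul R (FractionRing R) b)) := by
  set M := RR.comap (LinearMap.lsmul R (FractionRing R) a) ⊓
      RR.comap (LinearMap.lsmul R (FractionRing R) b) with hM
  have hmem : ∀ (c : R) (x : FractionRing R),
      x ∈ RR.comap (LinearMap.lsmul R (FractionRing R) c) ↔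
        ∃ r : R, algebraMap R (FractionRing R) r = c • x := by
    intro c x
    simp [hRR, Submodule.mem_comap]
  refine ⟨{ carrier := M,
            zero_mem' := M.zero_mem,
            add_mem' := fun hx hy => M.add_mem hx hy,
            neg_mem' := fun hx => M.neg_mem hx,
            one_mem' := ?_,
            mul_mem' := ?_ }, rfl⟩
  · intro x y hx hy
    obtain ⟨hxa, hxb⟩ := hx
    obtain ⟨hya, hyb⟩ := hy
    obtain ⟨ra, hra⟩ := (hmem a x).1 hxa
    obtain ⟨rb, hrb⟩ := (hmem b x).1 hxb
    obtain ⟨sa, hsa⟩ := (hmem a y).1 hya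
    obtain ⟨sb, hsb⟩ := (hmem b y).1 hyb
    show x * y ∈ M
    rw [h]
    constructor
    · refine (hmem (a ^ 2) (x * y)).2 ⟨ra * sa, ?_⟩
      rw [map_mul, hra, hsa]
      simp only [Algebra.smul_def, map_pow]
      ring
    · refine (hmem (b ^ 2) (x * y)).2 ⟨rb * sb, ?_⟩
      rw [map_mul, hrb, hsb]
      simp only [Algebra.smul_def, map_pow]
      ring
  · constructor
    · exact (hmem a 1).2 ⟨a, by simp [Algebra.smul_def]⟩
    · exact (hmem b 1).2 ⟨b, by simp [Algebra.smul_def]⟩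
end

section
/- Let $R$ be a commutative ring, $a,b$ non-zerodivisors of $R$, and $I=aR:_Rb$. If $a^2R:_Rb^2=a(aR:_Rb)$, then $I^2=aI$. -/
/-- if `a²R :_R b² = a (aR :_R b)` then `I² = aI` where
`I = aR :_R b`. -/
theorem stmt2 {R : Type*} [CommRing R] (a b : R)
    (ha : a ∈ nonZeroDivisors R) (hb : b ∈ nonZeroDivisors R)
    (h : (Ideal.span {a ^ 2}).colon (Ideal.span {b ^ 2}) =
        Ideal.span {a} * (Ideal.span {a}).colon (Ideal.span {b})) :
    ((Ideal.span {a}).colon (Ideal.span {b})) ^ 2 =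
      Ideal.span {a} * (Ideal.span {a}).colon (Ideal.span {b}) := by
  apply le_antisymm
  · rw [← h, pow_two]
    refine Ideal.mul_le.2 fun x hx y hy => ?_
    rw [Ideal.mem_colon_span_singleton, Ideal.mem_span_singleton] at hx hy ⊢
    obtain ⟨r, hr⟩ := hx
    obtain ⟨s, hs⟩ := hy
    exact ⟨r * s, by rw [pow_two, pow_two, mul_mul_mul_comm, hr, hs]; ring⟩
  · rw [pow_two]
    have ha' : a ∈ (Ideal.span {a}).colon (Ideal.span {b}) := by
      rw [Ideal.mem_colon_span_singleton, Ideal.mem_span_singleton]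
      exact ⟨b, rfl⟩
    have : Ideal.span {a} ≤ (Ideal.span {a}).colon (Ideal.span {b}) := by
      rwa [Ideal.span_le, Set.singleton_subset_iff]
    exact Ideal.mul_mono this le_rfl
end

section
/- Let $R=k[x,y]$ be a polynomial ring over a field $k$ and $M\subseteq R^2$ the submodule generated by $(x,0)$, $(y,x)$, $(0,y)$. For every integer $n\ge 2$, $x^nM\cap y^nM=x^ny^nR^2$, and hence $\frac{M}{x^n}\cap\frac{M}{y^n}=R^2$. -/
/-! `M` contains `x²R²` and `y²R²` (e.g. `(0, x²) = x • (y, x) - y • (x, 0)`), which gives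
`xⁿyⁿR² ⊆ xⁿM ∩ yⁿM`. Conversely, `xⁿu = yⁿv` forces `yⁿ ∣ u` because `x` and `y` are coprime.
If `xⁿw, yⁿw ∈ M` in `Q(R)²`, then `yⁿ(xⁿw) = xⁿ(yⁿw)` lies in `yⁿM ∩ xⁿM = xⁿyⁿR²`, and
cancelling `xⁿyⁿ` puts `w` in `R²`. -/

open Pointwise MvPolynomial

section

variable {R : Type*} [CommRing R]

lemma Prod.smul_mem_of_mk_mem {N : Submodule R (R × R)} {a : R}
    (h₁ : (a, 0) ∈ N) (h₂ : (0, a) ∈ N) (v : R × R) : a • v ∈ N := by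
  have hv : a • v = v.1 • (a, 0) + v.2 • (0, a) := by
    ext <;> simp [mul_comm]
  rw [hv]
  exact add_mem (N.smul_mem _ h₁) (N.smul_mem _ h₂)

variable (x y : R)

lemma pow_add_two_smul_mem_span_left (m : ℕ) (v : R × R) :
    x ^ (m + 2) • v ∈ Submodule.span R {(x, 0), (y, x), (0, y)} := by
  set N := Submodule.span R {(x, 0), (y, x), (0, y)}
  have h₁ : (x, 0) ∈ N := Submodule.subset_span (by simp)
  have h₂ : (y, x) ∈ N := Submodule.subset_span (by simp)
  refine Prod.smul_mem_of_mk_mem ?_ ?_ v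
  · have : (x ^ (m + 2), (0 : R)) = x ^ (m + 1) • (x, 0) := by
      ext <;> simp [pow_succ]
    rw [this]
    exact N.smul_mem _ h₁
  · have : ((0 : R), x ^ (m + 2)) = x ^ (m + 1) • (y, x) - (y * x ^ m) • (x, 0) := by
      ext <;> simp only [Prod.smul_mk, smul_eq_mul, Prod.mk_sub_mk] <;> ring
    rw [this]
    exact sub_mem (N.smul_mem _ h₂) (N.smul_mem _ h₁)

lemma pow_add_two_smul_mem_span_right (m : ℕ) (v : R × R) :
    y ^ (m + 2) • v ∈ Submodule.span R {(x, 0), (y, x), (0, y)} := by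
  set N := Submodule.span R {(x, 0), (y, x), (0, y)}
  have h₂ : (y, x) ∈ N := Submodule.subset_span (by simp)
  have h₃ : (0, y) ∈ N := Submodule.subset_span (by simp)
  refine Prod.smul_mem_of_mk_mem ?_ ?_ v
  · have : (y ^ (m + 2), (0 : R)) = y ^ (m + 1) • (y, x) - (x * y ^ m) • (0, y) := by
      ext <;> simp only [Prod.smul_mk, smul_eq_mul, Prod.mk_sub_mk] <;> ring
    rw [this]
    exact sub_mem (N.smul_mem _ h₂) (N.smul_mem _ h₃)
  · have : ((0 : R), y ^ (m + 2)) = y ^ (m + 1) • (0, y) := by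
      ext <;> simp [pow_succ]
    rw [this]
    exact N.smul_mem _ h₃

end

section

variable {R : Type*} [CommRing R] [DecompositionMonoid R] {a b : R}

lemma IsRelPrime.exists_eq_smul_of_smul_eq_smul (hab : IsRelPrime a b) {u v : R × R}
    (h : a • u = b • v) : ∃ w, u = b • w := by
  have hdvd : ∀ {s t : R}, a * s = b * t → b ∣ s := fun {s t} hst =>
    hab.symm.dvd_of_dvd_mul_left ⟨t, hst⟩
  obtain ⟨w₁, hw₁⟩ := hdvd congr(($h).1)
  obtain ⟨w₂, hw₂⟩ := hdvd congr(($h).2)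
  exact ⟨(w₁, w₂), Prod.ext hw₁ hw₂⟩

lemma IsRelPrime.smul_inf_smul_eq (hab : IsRelPrime a b) {N : Submodule R (R × R)}
    (haN : ∀ v, a • v ∈ N) (hbN : ∀ v, b • v ∈ N) :
    a • N ⊓ b • N = (a * b) • (⊤ : Submodule R (R × R)) := by
  apply le_antisymm
  · rintro _ ⟨⟨u, -, rfl⟩, ⟨v, -, huv⟩⟩
    obtain ⟨w, rfl⟩ := hab.exists_eq_smul_of_smul_eq_smul huv.symm
    exact ⟨w, trivial, mul_smul a b w⟩
  · rintro _ ⟨w, -, rfl⟩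
    refine ⟨⟨b • w, hbN w, (mul_smul a b w).symm⟩, ⟨a • w, haN w, ?_⟩⟩
    simp only [DistribSMul.toLinearMap_apply, smul_smul, mul_comm]

end

section

variable {R P Q : Type*} [CommRing R] [AddCommGroup P] [Module R P] [AddCommGroup Q] [Module R Q]

lemma Submodule.comap_lsmul_map_inf_eq_range {φ : P →ₗ[R] Q} (hφ : Function.Injective φ)
    {N : Submodule R P} {a b : R} (ha : IsSMulRegular Q a) (hb : IsSMulRegular Q b)
    (hN : a • N ⊓ b • N ≤ (a * b) • ⊤) (haN : ∀ v, a • v ∈ N) (hbN : ∀ v, b • v ∈ N) :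
    (N.map φ).comap (LinearMap.lsmul R Q a) ⊓ (N.map φ).comap (LinearMap.lsmul R Q b) =
      LinearMap.range φ := by
  ext w
  constructor
  · rintro ⟨⟨p, hp, hpw⟩, ⟨q, hq, hqw⟩⟩
    have hbp : b • p = a • q := hφ <| by
      simp only [LinearMap.lsmul_apply] at hpw hqw
      rw [map_smul, map_smul, hpw, hqw, smul_smul, smul_smul, mul_comm]
    have hmem : b • p ∈ (a * b) • (⊤ : Submodule R P) := hN ⟨⟨q, hq, hbp.symm⟩, ⟨p, hp, rfl⟩⟩
    obtain ⟨r, -, hr⟩ := (Submodule.mem_smul_pointwise_iff_exists _ _ _).mp hmem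
    have hpr : p = a • r := hφ <| hb <| by
      simp only [← map_smul, ← hr, smul_smul, mul_comm]
    refine ⟨r, ha ?_⟩
    simp only [← map_smul, ← hpr, hpw, LinearMap.lsmul_apply]
  · rintro ⟨r, rfl⟩
    exact ⟨⟨a • r, haN r, by simp⟩, ⟨b • r, hbN r, by simp⟩⟩

end

/-- for `R = k[x,y]` and `M = ⟨(x,0),(y,x),(0,y)⟩ ⊆ R²` and every
`n ≥ 2`, `xⁿM ∩ yⁿM = xⁿyⁿR²`, and hence `M/xⁿ ∩ M/yⁿ = R²` inside `Q(R)²`,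
where `M/a` is realized as the preimage of the image `M'` of `M` in `Q(R)²`
under multiplication by `a`, and `R²` as the image of `φ`. -/
theorem stmt4 (k : Type*) [Field k]
    (x y : MvPolynomial (Fin 2) k) (hx : x = X 0) (hy : y = X 1)
    (M : Submodule (MvPolynomial (Fin 2) k)
      (MvPolynomial (Fin 2) k × MvPolynomial (Fin 2) k))
    (hM : M = Submodule.span _ {(x, 0), (y, x), (0, y)})
    (φ : MvPolynomial (Fin 2) k × MvPolynomial (Fin 2) k →ₗ[MvPolynomial (Fin 2) k]
      FractionRing (MvPolynomial (Fin 2) k) × FractionRing (MvPolynomial (Fin 2) k))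
    (hφ : φ = (Algebra.linearMap (MvPolynomial (Fin 2) k) (FractionRing (MvPolynomial (Fin 2) k))).prodMap
      (Algebra.linearMap (MvPolynomial (Fin 2) k) (FractionRing (MvPolynomial (Fin 2) k)))) :
    ∀ n : ℕ, 2 ≤ n →
      x ^ n • M ⊓ y ^ n • M =
          (x ^ n * y ^ n) • (⊤ : Submodule (MvPolynomial (Fin 2) k)
            (MvPolynomial (Fin 2) k × MvPolynomial (Fin 2) k)) ∧
        (M.map φ).comap (LinearMap.lsmul _ _ (x ^ n)) ⊓
            (M.map φ).comap (LinearMap.lsmul _ _ (y ^ n)) =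
          LinearMap.range φ := by
  intro n hn
  obtain ⟨m, rfl⟩ := Nat.exists_eq_add_of_le' hn
  subst hx hy hM
  have hxy : IsRelPrime (X 0 ^ (m + 2) : MvPolynomial (Fin 2) k) (X 1 ^ (m + 2)) := by
    refine IsRelPrime.pow (X_prime.irreducible.isRelPrime_iff_not_dvd.mpr ?_)
    rw [X_dvd_X]
    decide
  have hxM := pow_add_two_smul_mem_span_left (X 0 : MvPolynomial (Fin 2) k) (X 1) m
  have hyM := pow_add_two_smul_mem_span_right (X 0 : MvPolynomial (Fin 2) k) (X 1) m
  have hinter := hxy.smul_inf_smul_eq hxM hyM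
  have hφinj : Function.Injective φ := hφ ▸
    Prod.map_injective.mpr ⟨IsFractionRing.injective _ _, IsFractionRing.injective _ _⟩
  refine ⟨hinter, Submodule.comap_lsmul_map_inf_eq_range hφinj ?_ ?_ hinter.le hxM hyM⟩
  all_goals exact IsSMulRegular.of_ne_zero (pow_ne_zero _ (X_ne_zero _))
end

section
/- Let $R$ be a commutative ring, $M$ a torsion-free $R$-module, $V=\mathrm{Q}(R)\otimes_R M$, and $\widetilde{M}=\{f\in V\mid If\subseteq M\text{ for some ideal }I\text{ of }R\text{ with }\mathrm{ht}_R I\ge 2\}$. If $a,b$ are non-zerodivisors of $R$ with $\mathrm{ht}_R(a,b)\ge 2$, then the sequence $a,b$ is $\widetilde{M}$-regular. -/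
open Pointwise

/-- The height of an ideal: the infimum of the heights (in the prime spectrum)
of the primes containing it; `⊤` for the unit ideal. -/
noncomputable def idealHt {R : Type*} [CommRing R] (I : Ideal R) : ℕ∞ :=
  ⨅ p ∈ {p : PrimeSpectrum R | I ≤ p.asIdeal}, Order.height p

/-- for a torsion-free module `M` over a commutative ring `R`,
`M̃ = {f ∈ Q(R) ⊗ M | If ⊆ M for some ideal I of height ≥ 2}` (realized inside
the localized module `V = (R⁰)⁻¹M ≅ Q(R) ⊗ M`), and non-zerodivisors `a, b`
with `ht (a,b) ≥ 2`, the sequence `a, b` is `M̃`-regular. -/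
theorem stmt5 {R : Type*} [CommRing R] {M : Type*} [AddCommGroup M] [Module R M]
    (htf : ∀ r ∈ nonZeroDivisors R, Function.Injective fun x : M => r • x)
    (a b : R) (ha : a ∈ nonZeroDivisors R) (hb : b ∈ nonZeroDivisors R)
    (hab : 2 ≤ idealHt (Ideal.span {a, b}))
    (T : Set (LocalizedModule (nonZeroDivisors R) M))
    (hT : T = {f | ∃ I : Ideal R, 2 ≤ idealHt I ∧ ∀ i ∈ I,
      i • f ∈ LinearMap.range (LocalizedModule.mkLinearMap (nonZeroDivisors R) M)}) :
    (∀ x ∈ T, a • x = 0 → x = 0) ∧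
      ∀ x ∈ T, (∃ y ∈ T, b • x = a • y) → ∃ z ∈ T, x = a • z := by
  subst hT
  have ha' : IsUnit (algebraMap R (Localization (nonZeroDivisors R)) a) :=
    IsLocalization.map_units _ ⟨a, ha⟩
  obtain ⟨u, hu⟩ := ha'
  have key : ∀ x : LocalizedModule (nonZeroDivisors R) M, a • x = u • x := fun x => by
    rw [Units.smul_def, hu, algebraMap_smul]
  have hinj : ∀ x : LocalizedModule (nonZeroDivisors R) M, a • x = 0 → x = 0 := by
    intro x hx
    rw [key] at hx
    have := congrArg (fun w => u⁻¹ • w) hx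
    simpa [inv_smul_smul] using this
  have hcan : ∀ w y : LocalizedModule (nonZeroDivisors R) M, a • w = a • y → w = y := by
    intro w y h
    have h0 : a • (w - y) = 0 := by rw [smul_sub, h, sub_self]
    exact sub_eq_zero.mp (hinj _ h0)
  refine ⟨fun x _ hx => hinj x hx, ?_⟩
  rintro x ⟨I, hI2, hIx⟩ ⟨y, ⟨J, hJ2, hJy⟩, hxy⟩
  set z : LocalizedModule (nonZeroDivisors R) M := u⁻¹ • x with hzdef
  have hzx : a • z = x := by rw [key, smul_inv_smul]
  have hbz : b • z = y := by
    apply hcan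
    calc a • (b • z) = b • (a • z) := smul_comm a b z
      _ = b • x := by rw [hzx]
      _ = a • y := hxy
  refine ⟨z, ⟨Ideal.span {a} * I + Ideal.span {b} * J, ?_, ?_⟩, hzx.symm⟩
  · -- height ≥ 2
    unfold idealHt
    refine le_iInf₂ fun p hp => ?_
    simp only [Set.mem_setOf_eq, Submodule.add_eq_sup, sup_le_iff] at hp
    obtain ⟨h1, h2⟩ := hp
    rw [p.2.mul_le] at h1 h2
    rcases h1 with h1 | h1
    · rcases h2 with h2 | h2
      · have hsp : Ideal.span {a, b} ≤ p.asIdeal := by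
          rw [Ideal.span_le]
          rintro r (rfl | rfl)
          · exact h1 (Ideal.subset_span rfl)
          · exact h2 (Ideal.subset_span rfl)
        exact le_trans hab (iInf₂_le p hsp)
      · exact le_trans hJ2 (iInf₂_le p h2)
    · exact le_trans hI2 (iInf₂_le p h1)
  · -- K • z ⊆ M
    intro c hc
    have hsub : Ideal.span {a} * I + Ideal.span {b} * J ≤
        Submodule.comap (LinearMap.toSpanSingleton R _ z)
          (LinearMap.range (LocalizedModule.mkLinearMap (nonZeroDivisors R) M)) := by
      rw [Submodule.add_eq_sup, sup_le_iff]
      constructor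
      · rw [Ideal.span_singleton_mul_le_iff]
        intro i hi
        simp only [Submodule.mem_comap, LinearMap.toSpanSingleton_apply]
        have : (a * i) • z = i • x := by rw [mul_comm, mul_smul, hzx]
        rw [this]
        exact hIx i hi
      · rw [Ideal.span_singleton_mul_le_iff]
        intro j hj
        simp only [Submodule.mem_comap, LinearMap.toSpanSingleton_apply]
        have : (b * j) • z = j • y := by rw [mul_comm, mul_smul, hbz]
        rw [this]
        exact hJy j hj
    simpa using hsub hc
end

section
/- Let $R$ be a Noetherian ring, $M$ a torsion-free $R$-module, $V=\mathrm{Q}(R)\otimes_R M$, and $N$ an $R$-submodule of $V$ with $M\subseteq N$. If for all non-zerodivisors $a,b$ of $R$ with $\mathrm{ht}_R(a,b)\ge 2$ the sequence $a,b$ is $N$-regular, then $\widetilde{M}\subseteq N$, where $\widetilde{M}=\{f\in V\mid If\subseteq M\text{ for some ideal }I\text{ with }\mathrm{ht}_R I\ge 2\}$. -/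
/-! Write `f = m / s`. The conductor `J = {r | r f ∈ M}` contains `s`, a non-zerodivisor, and
has height at least `2`. Prime avoidance over the associated primes of `R` and the minimal primes
of `(s)`, which have height at most `1` by Krull's principal ideal theorem, gives a non-zerodivisor
`b ∈ J` with `ht (s, b) ≥ 2`. Now `s f` and `b f` lie in `M ⊆ N`, and `b (s f) = s (b f) ∈ s N`,
so regularity of `s, b` on `N` gives `s f ∈ s N`; as `s` acts invertibly on `V`, `f ∈ N`. -/

open Pointwise

lemma idealHt_eq_height {R : Type*} [CommRing R] (I : Ideal R) : idealHt I = I.height := by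
  rw [idealHt, Ideal.height_eq_inf_minimalPrimes]
  refine le_antisymm (le_iInf₂ fun q hq => ?_) (le_iInf₂ fun p hp => ?_)
  · have := hq.isPrime
    exact (iInf₂_le (⟨q, this⟩ : PrimeSpectrum R) hq.le).trans
      (PrimeSpectrum.height_eq_orderHeight ⟨q, this⟩).ge
  · rw [← PrimeSpectrum.height_eq_orderHeight, ← Ideal.height_eq_inf_minimalPrimes]
    exact Ideal.height_mono hp

namespace Ideal

variable {R : Type*} [CommRing R]

lemma le_height_of_forall_isPrime {I : Ideal R} {n : ℕ∞}
    (h : ∀ p : Ideal R, p.IsPrime → I ≤ p → n ≤ p.height) : n ≤ I.height := by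
  rw [height_eq_inf_minimalPrimes]
  exact le_iInf₂ fun p hp => h p hp.isPrime hp.le

lemma two_le_height_span_pair {a b : R} (ha : a ∈ nonZeroDivisors R)
    (hb : ∀ q ∈ (span {a}).minimalPrimes, b ∉ q) : 2 ≤ (span {a, b}).height := by
  refine le_height_of_forall_isPrime fun p _ hp => ?_
  obtain ⟨q, hq, hqp⟩ := exists_minimalPrimes_le
    ((span_mono (Set.subset_insert b {a})).trans (Set.pair_comm a b ▸ hp))
  have := hq.isPrime
  have hbp : b ∈ p := hp (subset_span (by simp))
  have hqp : q < p := lt_of_le_of_ne hqp fun h => hb q hq (h ▸ hbp)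
  calc (2 : ℕ∞) = 1 + 1 := rfl
    _ ≤ q.height + 1 := by
      gcongr
      exact (one_le_height_span_singleton_of_mem_nonZeroDivisors ha).trans (height_mono hq.le)
    _ ≤ p.height := height_add_one_le_of_lt_of_isPrime hqp

lemma exists_mem_nonZeroDivisors_two_le_height_span_pair [IsNoetherianRing R] {J : Ideal R}
    (hJ : 2 ≤ J.height) {a : R} (haJ : a ∈ J) (ha : a ∈ nonZeroDivisors R) :
    ∃ b ∈ J, b ∈ nonZeroDivisors R ∧ 2 ≤ (span {a, b}).height := by
  set bad := associatedPrimes R R ∪ (span {a}).minimalPrimes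
  have hbad : bad.Finite :=
    (associatedPrimes.finite R R).union (span {a}).finite_minimalPrimes_of_isNoetherianRing
  have hnot_le : ∀ P ∈ bad, ¬ J ≤ P := by
    rintro P (hP | hP) hJP
    · have : a ∈ ⋃ p ∈ associatedPrimes R R, (p : Set R) := Set.mem_biUnion hP (hJP haJ)
      rw [biUnion_associatedPrimes_eq_compl_nonZeroDivisors] at this
      exact this ha
    · have := hJ.trans ((height_mono hJP).trans
        (height_le_one_of_isPrincipal_of_mem_minimalPrimes _ P hP))
      exact absurd this (by decide)
  have hprime : ∀ P ∈ bad, P.IsPrime := by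
    rintro P (hP | hP)
    exacts [hP.isPrime, hP.isPrime]
  obtain ⟨b, hbJ, hb⟩ : ∃ b ∈ J, ∀ P ∈ bad, b ∉ P := by
    have := (subset_union_prime_finite hbad (f := id) ⊥ ⊥ fun P hP _ _ => hprime P hP).not.mpr
      fun ⟨P, hP, hJP⟩ => hnot_le P hP hJP
    simpa [Set.not_subset] using this
  refine ⟨b, hbJ, ?_, two_le_height_span_pair ha fun q hq => hb q (Or.inr hq)⟩
  by_contra hb'
  have : b ∈ (nonZeroDivisors R : Set R)ᶜ := hb'
  rw [← biUnion_associatedPrimes_eq_compl_nonZeroDivisors] at this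
  obtain ⟨P, hP, hbP⟩ := Set.mem_iUnion₂.mp this
  exact hb P (Or.inl hP) hbP

end Ideal

lemma Submodule.mem_of_smul_mem_of_smul_mem {R V : Type*} [CommRing R] [AddCommGroup V]
    [Module R V] (N : Submodule R V) {a b : R} (ha : Function.Injective fun x : V => a • x)
    (hreg : ∀ x ∈ N, b • x ∈ a • N → x ∈ a • N) {f : V} (haf : a • f ∈ N) (hbf : b • f ∈ N) :
    f ∈ N := by
  have hba : b • a • f ∈ a • N := by
    rw [smul_comm]
    exact smul_mem_pointwise_smul _ _ _ hbf
  obtain ⟨n, hn, hnf⟩ := (mem_smul_pointwise_iff_exists _ _ _).mp (hreg _ haf hba)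
  exact ha hnf ▸ hn

theorem stmt6_general {R : Type*} [CommRing R] [IsNoetherianRing R]
    {M : Type*} [AddCommGroup M] [Module R M]
    (N : Submodule R (LocalizedModule (nonZeroDivisors R) M))
    (hMN : LinearMap.range (LocalizedModule.mkLinearMap (nonZeroDivisors R) M) ≤ N)
    (hreg : ∀ a b : R, a ∈ nonZeroDivisors R → b ∈ nonZeroDivisors R →
      2 ≤ idealHt (Ideal.span {a, b}) →
      (∀ x ∈ N, a • x = 0 → x = 0) ∧ (∀ x ∈ N, b • x ∈ a • N → x ∈ a • N)) :
    {f : LocalizedModule (nonZeroDivisors R) M | ∃ I : Ideal R, 2 ≤ idealHt I ∧ ∀ i ∈ I,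
        i • f ∈ LinearMap.range (LocalizedModule.mkLinearMap (nonZeroDivisors R) M)} ⊆
      ↑N := by
  rintro f ⟨I, hI, hIf⟩
  set Φ := LocalizedModule.mkLinearMap (nonZeroDivisors R) M
  set J := (LinearMap.range Φ).colon {f}
  have hIJ : I ≤ J := fun i hi => Submodule.mem_colon_singleton.mpr (hIf i hi)
  obtain ⟨m, s, rfl⟩ : ∃ m s, f = LocalizedModule.mk m s :=
    LocalizedModule.induction_on (fun m s => ⟨m, s, rfl⟩) f
  have hsJ : (s : R) ∈ J := Submodule.mem_colon_singleton.mpr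
    ⟨m, by rw [LocalizedModule.smul'_mk, ← Submonoid.smul_def, LocalizedModule.mk_cancel]; rfl⟩
  obtain ⟨b, hbJ, hb, hsb⟩ := Ideal.exists_mem_nonZeroDivisors_two_le_height_span_pair
    ((idealHt_eq_height I ▸ hI).trans (Ideal.height_mono hIJ)) hsJ s.2
  exact N.mem_of_smul_mem_of_smul_mem
    (IsLocalizedModule.smul_injective Φ s) (hreg s b s.2 hb (by rwa [idealHt_eq_height])).2
    (hMN (Submodule.mem_colon_singleton.mp hsJ)) (hMN (Submodule.mem_colon_singleton.mp hbJ))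

/-- for a Noetherian ring `R`, a torsion-free module `M`, and a
submodule `N` of `V = Q(R) ⊗ M` containing `M` such that every pair of
non-zerodivisors `a, b` with `ht (a,b) ≥ 2` is an `N`-regular sequence, one has
`M̃ ⊆ N`. -/
theorem stmt6 {R : Type*} [CommRing R] [IsNoetherianRing R]
    {M : Type*} [AddCommGroup M] [Module R M]
    (htf : ∀ r ∈ nonZeroDivisors R, Function.Injective fun x : M => r • x)
    (N : Submodule R (LocalizedModule (nonZeroDivisors R) M))
    (hMN : LinearMap.range (LocalizedModule.mkLinearMap (nonZeroDivisors R) M) ≤ N)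
    (hreg : ∀ a b : R, a ∈ nonZeroDivisors R → b ∈ nonZeroDivisors R →
      2 ≤ idealHt (Ideal.span {a, b}) →
      (∀ x ∈ N, a • x = 0 → x = 0) ∧ (∀ x ∈ N, b • x ∈ a • N → x ∈ a • N)) :
    {f : LocalizedModule (nonZeroDivisors R) M | ∃ I : Ideal R, 2 ≤ idealHt I ∧ ∀ i ∈ I,
        i • f ∈ LinearMap.range (LocalizedModule.mkLinearMap (nonZeroDivisors R) M)} ⊆
      ↑N :=
  stmt6_general N hMN hreg
end

section
/- Let $R$ be a Noetherian ring, $M$ a finitely generated torsion-free $R$-module, and $a$ a non-zerodivisor of $R$ with $\mathrm{Min}^1_R M/aM\ne\emptyset$. Then there exists a non-zerodivisor $b\in R$ such that $\mathrm{ht}_R(a,b)\ge 2$ and $\mathrm{U}(aM)=aM:_M b$. -/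
/-!
Let `T ⊆ M/aM` be the image of `U(aM)`: the elements that vanish after localizing at every
`p ∈ Min¹(M/aM)`. As `T` is finitely generated, `T_p = 0` forces `ann T ⊄ p`. A height-one
minimal prime of `(a)` either lies in `Min¹(M/aM)` or does not contain `ann(M/aM) ⊆ ann T`, and
no associated prime of `R` contains `a ∈ ann T`. Prime avoidance therefore gives `b ∈ ann T`
outside all of these primes: `b` is a non-zerodivisor, `bU(aM) ⊆ aM`, and `b ∉ p` for
`p ∈ Min¹` gives the reverse inclusion. Finally, a prime of height `≤ 1` containing the
non-zerodivisor `a` is a height-one minimal prime of `(a)`, so it cannot contain `b`.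
-/

open Pointwise

/-- `Min¹_R(M/aM)`: the height-one minimal primes of the support of `M/aM`
(equivalently, of the annihilator of `M/aM`, as `M` is finitely generated). -/
noncomputable def minOne (R : Type*) [CommRing R] (M : Type*) [AddCommGroup M]
    [Module R M] (a : R) : Set (Ideal R) :=
  {p | p ∈ (Module.annihilator R (M ⧸ (a • (⊤ : Submodule R M)))).minimalPrimes ∧
    idealHt p = 1}

/-- `U(aM)`: the intersection of the primary components of `aM` in `M` at the
height-one minimal primes of `M/aM` (the primary component at a minimal prime
`p` being the saturation `{x ∈ M | sx ∈ aM for some s ∉ p}`); by convention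
`U(aM) = M` when there are no such primes. -/
noncomputable def Uset (R : Type*) [CommRing R] (M : Type*) [AddCommGroup M]
    [Module R M] (a : R) : Set M :=
  ⋂ p ∈ minOne R M a, {x : M | ∃ s, s ∉ p ∧ s • x ∈ (a • (⊤ : Submodule R M))}

open scoped nonZeroDivisors

section

variable {R : Type*} [CommRing R]

theorem idealHt_asIdeal (p : PrimeSpectrum R) : idealHt p.asIdeal = Order.height p :=
  le_antisymm (iInf₂_le p le_rfl) (le_iInf₂ fun _ hq ↦ Order.height_mono hq)

theorem notMem_of_height_eq_zero {a : R} (ha : a ∈ R⁰) {Q : PrimeSpectrum R}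
    (hQ : Order.height Q = 0) : a ∉ Q.asIdeal := fun haQ ↦
  notMem_nonZeroDivisors_of_mem_mem_minimalPrimes haQ
    (PrimeSpectrum.isMin_iff.mp (Order.height_eq_zero.mp hQ)) ha

theorem mem_minimalPrimes_span_singleton_of_height_le_one {a : R} (ha : a ∈ R⁰)
    {P : PrimeSpectrum R} (haP : a ∈ P.asIdeal) (hP : Order.height P ≤ 1) :
    P.asIdeal ∈ (Ideal.span {a}).minimalPrimes ∧ Order.height P = 1 := by
  have hbelow : ∀ Q < P, a ∉ Q.asIdeal := fun Q hQ ↦ notMem_of_height_eq_zero ha <|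
    Order.lt_one_iff.mp (Order.height_le_coe_iff.mp (by exact_mod_cast hP) Q hQ)
  refine ⟨⟨⟨P.isPrime, (Ideal.span_singleton_le_iff_mem _).mpr haP⟩, ?_⟩, ?_⟩
  · rintro Q ⟨hQ, hQa⟩ hQP
    by_contra hPQ
    exact hbelow ⟨Q, hQ⟩ (lt_of_le_not_ge hQP hPQ) ((Ideal.span_singleton_le_iff_mem _).mp hQa)
  · refine le_antisymm hP (Order.one_le_iff_ne_zero.mpr fun h0 ↦ ?_)
    exact notMem_of_height_eq_zero ha h0 haP

theorem two_le_idealHt_span_pair {a b : R} (ha : a ∈ R⁰)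
    (hb : ∀ p ∈ (Ideal.span {a}).minimalPrimes, idealHt p = 1 → b ∉ p) :
    2 ≤ idealHt (Ideal.span {a, b}) := by
  refine le_iInf₂ fun P hP ↦ ?_
  by_contra! hlt
  obtain ⟨hPmin, hPht⟩ := mem_minimalPrimes_span_singleton_of_height_le_one ha
    (hP (Ideal.subset_span (by simp))) (Order.le_of_lt_succ hlt)
  exact hb P.asIdeal hPmin (by rw [idealHt_asIdeal, hPht]) (hP (Ideal.subset_span (by simp)))

theorem mem_nonZeroDivisors_iff_forall_notMem_associatedPrimes [IsNoetherianRing R] {b : R} :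
    b ∈ R⁰ ↔ ∀ q ∈ associatedPrimes R R, b ∉ q := by
  simpa using (Set.ext_iff.mp (biUnion_associatedPrimes_eq_compl_nonZeroDivisors R) b).not.symm

theorem Ideal.exists_mem_forall_notMem_of_finite {I : Ideal R} {F : Set (Ideal R)}
    (hF : F.Finite) (hprime : ∀ p ∈ F, p.IsPrime) (hI : ∀ p ∈ F, ¬ I ≤ p) :
    ∃ b ∈ I, ∀ p ∈ F, b ∉ p := by
  by_contra! h
  obtain ⟨p, hpF, hIp⟩ := (Ideal.subset_union_prime_finite hF (f := id) ⊥ ⊥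
    fun p hp _ _ ↦ hprime p hp).mp fun b hb ↦ by simpa using h b hb
  exact hI p hpF hIp

theorem exists_mem_nonZeroDivisors_notMem_minimalPrimes_span_singleton [IsNoetherianRing R]
    {a : R} (ha : a ∈ R⁰) {I : Ideal R} (haI : a ∈ I)
    (hI : ∀ p ∈ (Ideal.span {a}).minimalPrimes, idealHt p = 1 → ¬ I ≤ p) :
    ∃ b ∈ I, b ∈ R⁰ ∧ ∀ p ∈ (Ideal.span {a}).minimalPrimes, idealHt p = 1 → b ∉ p := by
  let F := associatedPrimes R R ∪ {p ∈ (Ideal.span {a}).minimalPrimes | idealHt p = 1}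
  have hF : F.Finite := (associatedPrimes.finite R R).union
    ((Ideal.finite_minimalPrimes_of_isNoetherianRing R _).subset fun _ hp ↦ hp.1)
  obtain ⟨b, hbI, hbF⟩ := I.exists_mem_forall_notMem_of_finite hF
    (by rintro p (hp | hp); exacts [hp.isPrime, hp.1.isPrime]) <| by
      rintro p (hp | ⟨hpmin, hp1⟩) hIp
      · exact mem_nonZeroDivisors_iff_forall_notMem_associatedPrimes.mp ha p hp (hIp haI)
      · exact hI p hpmin hp1 hIp
  exact ⟨b, hbI, mem_nonZeroDivisors_iff_forall_notMem_associatedPrimes.mpr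
    fun q hq ↦ hbF q (.inl hq), fun p hp hp1 ↦ hbF p (.inr ⟨hp, hp1⟩)⟩

theorem not_annihilator_le_of_le_torsion' {N : Type*} [AddCommGroup N] [Module R N]
    {T : Submodule R N} [Module.Finite R T] {p : PrimeSpectrum R}
    (hT : T ≤ Submodule.torsion' R N p.asIdeal.primeCompl) : ¬ T.annihilator ≤ p.asIdeal := by
  rw [Submodule.annihilator, ← Module.mem_support_iff_of_finite, Module.notMem_support_iff']
  intro m
  obtain ⟨⟨s, hs⟩, hsm⟩ := hT m.2
  exact ⟨s, hs, Subtype.ext hsm⟩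

section minOne

variable {M : Type*} [AddCommGroup M] [Module R M]

theorem mem_annihilator_quotient_smul_top (a : R) :
    a ∈ Module.annihilator R (M ⧸ a • (⊤ : Submodule R M)) := by
  rw [Submodule.annihilator_quotient]
  exact Submodule.mem_colon.mpr fun m _ ↦ Submodule.smul_mem_pointwise_smul m a ⊤ trivial

theorem mem_minOne_iff {a : R} (ha : a ∈ R⁰) {p : Ideal R} :
    p ∈ minOne R M a ↔ p ∈ (Ideal.span {a}).minimalPrimes ∧ idealHt p = 1 ∧
      Module.annihilator R (M ⧸ a • (⊤ : Submodule R M)) ≤ p := by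
  have haAnn := (Ideal.span_singleton_le_iff_mem _).mpr
    (mem_annihilator_quotient_smul_top (M := M) a)
  constructor
  · rintro ⟨hpmin, hp1⟩
    refine ⟨(mem_minimalPrimes_span_singleton_of_height_le_one (P := ⟨p, hpmin.isPrime⟩)
      ha ?_ ?_).1, hp1, hpmin.1.2⟩
    · exact haAnn.trans hpmin.1.2 (Ideal.mem_span_singleton_self a)
    · rw [← idealHt_asIdeal]; exact hp1.le
  · rintro ⟨hpmin, hp1, hAnn⟩
    exact ⟨⟨⟨hpmin.isPrime, hAnn⟩, fun q hq hqp ↦ hpmin.2 ⟨hq.1, haAnn.trans hq.2⟩ hqp⟩, hp1⟩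

end minOne

end

theorem stmt11_general {R : Type*} [CommRing R] [IsNoetherianRing R]
    {M : Type*} [AddCommGroup M] [Module R M] [Module.Finite R M]
    (a : R) (ha : a ∈ nonZeroDivisors R) :
    ∃ b ∈ nonZeroDivisors R, 2 ≤ idealHt (Ideal.span {a, b}) ∧
      Uset R M a = {x : M | b • x ∈ (a • (⊤ : Submodule R M))} := by
  let N := M ⧸ a • (⊤ : Submodule R M)
  let S : Set (PrimeSpectrum R) := {p | p.asIdeal ∈ minOne R M a}
  let T : Submodule R N := ⨅ p ∈ S, Submodule.torsion' R N p.asIdeal.primeCompl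
  have hTS : ∀ p ∈ S, T ≤ Submodule.torsion' R N p.asIdeal.primeCompl := fun p hp ↦
    iInf₂_le p hp
  have hAnnT : Module.annihilator R N ≤ T.annihilator := by
    rw [← Submodule.annihilator_top]; exact Submodule.annihilator_mono le_top
  obtain ⟨b, hbT, hb, hbp⟩ := exists_mem_nonZeroDivisors_notMem_minimalPrimes_span_singleton ha
    (hAnnT (mem_annihilator_quotient_smul_top a)) fun p hpmin hp1 hTp ↦ by
      by_cases hAnnp : Module.annihilator R N ≤ p
      · have hp := (mem_minOne_iff ha).mpr ⟨hpmin, hp1, hAnnp⟩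
        exact not_annihilator_le_of_le_torsion' (hTS ⟨p, hp.1.isPrime⟩ hp) hTp
      · exact hAnnp (hAnnT.trans hTp)
  refine ⟨b, hb, two_le_idealHt_span_pair ha hbp, Set.ext fun x ↦ ?_⟩
  simp only [Uset, Set.mem_iInter, Set.mem_ofPred_eq]
  constructor
  · intro hx
    have hxT : (Submodule.Quotient.mk x : N) ∈ T :=
      (Submodule.mem_iInf _).mpr fun p ↦ (Submodule.mem_iInf _).mpr fun hp ↦ by
        obtain ⟨s, hs, hsx⟩ := hx p.asIdeal hp
        exact ⟨⟨s, hs⟩, (Submodule.Quotient.mk_eq_zero _).mpr hsx⟩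
    have hbx := Submodule.mem_annihilator.mp hbT _ hxT
    rwa [← Submodule.Quotient.mk_smul, Submodule.Quotient.mk_eq_zero] at hbx
  · intro hx p hp
    obtain ⟨hpmin, hp1, -⟩ := (mem_minOne_iff ha).mp hp
    exact ⟨b, hbp p hpmin hp1, hx⟩

/-- for a finitely generated torsion-free module `M` over a
Noetherian ring `R` and a non-zerodivisor `a` with `Min¹_R(M/aM) ≠ ∅`, there
is a non-zerodivisor `b` with `ht (a,b) ≥ 2` and `U(aM) = aM :_M b`. -/
theorem stmt11 {R : Type*} [CommRing R] [IsNoetherianRing R]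
    {M : Type*} [AddCommGroup M] [Module R M] [Module.Finite R M]
    (htf : ∀ r ∈ nonZeroDivisors R, Function.Injective fun x : M => r • x)
    (a : R) (ha : a ∈ nonZeroDivisors R) (hne : (minOne R M a).Nonempty) :
    ∃ b ∈ nonZeroDivisors R, 2 ≤ idealHt (Ideal.span {a, b}) ∧
      Uset R M a = {x : M | b • x ∈ (a • (⊤ : Submodule R M))} :=
  stmt11_general a ha
end

section
/- Let $R$ be a Noetherian ring and $M$ a finitely generated torsion-free $R$-module such that $\widetilde{M}$ is a finitely generated $R$-module. Then there exist non-zerodivisors $a,b$ of $R$ such that $\widetilde{M}=\frac{M}{a}\cap\frac{M}{b}$ inside $\mathrm{Q}(R)\otimes_R M$. -/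
open scoped nonZeroDivisors

namespace Ideal

variable {R : Type*} [CommRing R]

theorem le_height_iff_forall_isPrime {I : Ideal R} {n : ℕ∞} :
    n ≤ I.height ↔ ∀ p : Ideal R, p.IsPrime → I ≤ p → n ≤ p.height := by
  refine ⟨fun h p _ hIp => h.trans (height_mono hIp), fun h => ?_⟩
  rw [height_eq_inf_minimalPrimes]
  exact le_iInf₂ fun p hp => h p hp.isPrime hp.1.2

theorem _root_.idealHt_eq_height_s16 (I : Ideal R) : idealHt I = I.height := by
  refine eq_of_forall_le_iff fun n => ?_
  rw [le_height_iff_forall_isPrime]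
  simp only [idealHt, le_iInf_iff, Set.mem_ofPred_eq, ← PrimeSpectrum.height_eq_orderHeight]
  exact ⟨fun h p hp hIp => h ⟨p, hp⟩ hIp, fun h p hIp => h p.asIdeal p.isPrime hIp⟩

theorem le_height_finset_inf {ι : Type*} {s : Finset ι} {f : ι → Ideal R} {n : ℕ∞}
    (h : ∀ i ∈ s, n ≤ (f i).height) : n ≤ (s.inf f).height :=
  le_height_iff_forall_isPrime.mpr fun p hp hle => by
    obtain ⟨i, hi, hip⟩ := hp.inf_le'.mp hle
    exact (h i hi).trans (height_mono hip)

theorem mem_nonZeroDivisors_iff_forall_notMem_associatedPrimes [IsNoetherianRing R] {b : R} :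
    b ∈ R⁰ ↔ ∀ p ∈ associatedPrimes R R, b ∉ p := by
  have := Set.ext_iff.mp (biUnion_associatedPrimes_eq_compl_nonZeroDivisors R) b
  simpa using (not_congr this).symm

theorem exists_mem_forall_notMem_of_finite_s16 {B : Set (Ideal R)} (hB : B.Finite)
    (hprime : ∀ p ∈ B, p.IsPrime) {K : Ideal R} (hK : ∀ p ∈ B, ¬ K ≤ p) :
    ∃ b ∈ K, ∀ p ∈ B, b ∉ p := by
  have := (subset_union_prime_finite hB (f := id) ⊥ ⊥ (I := K) fun p hp _ _ => hprime p hp).not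
  simpa [Set.not_subset] using this.mpr (by simpa using hK)

theorem two_le_height_span_pair_s16 {K : Ideal R} (hK : 2 ≤ K.height) {c b : R} (hc : c ∈ R⁰)
    (hb : ∀ p ∈ (span {c}).minimalPrimes, ¬ K ≤ p → b ∉ p) : 2 ≤ (span {c, b}).height := by
  refine le_height_iff_forall_isPrime.mpr fun P _ hcbP => ?_
  obtain ⟨p, hp, hpP⟩ := exists_minimalPrimes_le
    ((span_mono (Set.singleton_subset_iff.mpr (Set.mem_insert c _))).trans hcbP)
  have := hp.isPrime
  by_cases hKp : K ≤ p
  · exact hK.trans (height_mono (hKp.trans hpP))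
  · have hpP' : p < P :=
      lt_of_le_of_ne hpP fun h => hb p hp hKp (h ▸ hcbP (subset_span (by simp)))
    calc (2 : ℕ∞) = 1 + 1 := by norm_num
      _ ≤ p.height + 1 := by
        gcongr
        exact (one_le_height_span_singleton_of_mem_nonZeroDivisors hc).trans (height_mono hp.1.2)
      _ ≤ P.height := height_add_one_le_of_lt_of_isPrime hpP'

theorem exists_mem_nonZeroDivisors_two_le_height_span_pair_s16 [IsNoetherianRing R] {K : Ideal R}
    (hK : 2 ≤ K.height) {c : R} (hcK : c ∈ K) (hc : c ∈ R⁰) :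
    ∃ b ∈ K, b ∈ R⁰ ∧ 2 ≤ (span {c, b}).height := by
  set B := {p ∈ (span {c}).minimalPrimes | ¬ K ≤ p} ∪ associatedPrimes R R
  have hB : B.Finite :=
    ((span {c}).finite_minimalPrimes_of_isNoetherianRing.subset (Set.sep_subset _ _)).union
      (associatedPrimes.finite R R)
  obtain ⟨b, hbK, hbB⟩ := exists_mem_forall_notMem_of_finite_s16 hB
    (by rintro p (hp | hp); exacts [hp.1.isPrime, hp.isPrime])
    (by
      rintro p (hp | hp) hKp
      · exact hp.2 hKp
      · exact mem_nonZeroDivisors_iff_forall_notMem_associatedPrimes.mp hc p hp (hKp hcK))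
  exact ⟨b, hbK,
    mem_nonZeroDivisors_iff_forall_notMem_associatedPrimes.mpr fun p hp => hbB p (Or.inr hp),
    two_le_height_span_pair_s16 hK hc fun p hp hKp => hbB p (Or.inl ⟨hp, hKp⟩)⟩

end Ideal

namespace Submodule

variable {R V : Type*} [CommRing R] [AddCommGroup V] [Module R V]

/-- For `N` the image of `M` in `Q(R) ⊗ M` this is `M̃`. -/
def heightTwoSaturation (N : Submodule R V) : Set V :=
  {f | 2 ≤ (N.colon {f}).height}

theorem heightTwoSaturation_eq (N : Submodule R V) :
    N.heightTwoSaturation = {f | ∃ I : Ideal R, 2 ≤ idealHt I ∧ ∀ i ∈ I, i • f ∈ N} := by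
  ext f
  simp only [heightTwoSaturation, Set.mem_ofPred_eq, idealHt_eq_height_s16]
  exact ⟨fun h => ⟨_, h, fun _ => mem_colon_singleton.mp⟩, fun ⟨I, hI, hIf⟩ =>
    hI.trans (Ideal.height_mono fun i hi => mem_colon_singleton.mpr (hIf i hi))⟩

theorem colon_finset_eq_inf (N : Submodule R V) (s : Finset V) :
    N.colon s = s.inf fun x => N.colon {x} := by
  ext r
  simp [mem_colon, mem_finsetInf]

theorem exists_heightTwoSaturation_eq_inter [IsNoetherianRing R] {N : Submodule R V}
    {s : Finset V} (hs : N.heightTwoSaturation = span R (s : Set V)) {c : R} (hc : c ∈ R⁰)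
    (hcs : ∀ x ∈ s, c • x ∈ N) :
    ∃ a ∈ R⁰, ∃ b ∈ R⁰, N.heightTwoSaturation = {f | a • f ∈ N} ∩ {f | b • f ∈ N} := by
  have hK : 2 ≤ (N.colon (s : Set V)).height := by
    rw [colon_finset_eq_inf]
    exact Ideal.le_height_finset_inf fun x hx =>
      (hs ▸ subset_span hx : x ∈ N.heightTwoSaturation)
  obtain ⟨b, hbK, hb, hcb⟩ :=
    Ideal.exists_mem_nonZeroDivisors_two_le_height_span_pair_s16 hK (mem_colon.mpr hcs) hc
  refine ⟨c, hc, b, hb, Set.ext fun f => ⟨fun hf => ?_, fun ⟨hcf, hbf⟩ => ?_⟩⟩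
  · have hKf : N.colon s ≤ N.colon {f} :=
      colon_span.ge.trans (colon_mono le_rfl (Set.singleton_subset_iff.mpr (hs ▸ hf)))
    exact ⟨mem_colon_singleton.mp (hKf (mem_colon.mpr hcs)), mem_colon_singleton.mp (hKf hbK)⟩
  · refine hcb.trans (Ideal.height_mono (Ideal.span_le.mpr ?_))
    exact Set.insert_subset_iff.mpr
      ⟨mem_colon_singleton.mpr hcf, Set.singleton_subset_iff.mpr (mem_colon_singleton.mpr hbf)⟩

end Submodule

theorem stmt16_general {R : Type*} [CommRing R] [IsNoetherianRing R]
    {M : Type*} [AddCommGroup M] [Module R M]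
    (T : Set (LocalizedModule (nonZeroDivisors R) M))
    (hT : T = {f | ∃ I : Ideal R, 2 ≤ idealHt I ∧ ∀ i ∈ I,
      i • f ∈ LinearMap.range (LocalizedModule.mkLinearMap (nonZeroDivisors R) M)})
    (hfg : ∃ s : Finset (LocalizedModule (nonZeroDivisors R) M),
      T = ↑(Submodule.span R (↑s : Set (LocalizedModule (nonZeroDivisors R) M)))) :
    ∃ a ∈ nonZeroDivisors R, ∃ b ∈ nonZeroDivisors R,
      T = {f | a • f ∈ Set.range (LocalizedModule.mkLinearMap (nonZeroDivisors R) M)} ∩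
          {f | b • f ∈ Set.range (LocalizedModule.mkLinearMap (nonZeroDivisors R) M)} := by
  obtain ⟨s, hs⟩ := hfg
  set N := LinearMap.range (LocalizedModule.mkLinearMap R⁰ M)
  obtain ⟨c, hc⟩ := IsLocalizedModule.exist_integer_multiples_of_finset R⁰
    (LocalizedModule.mkLinearMap R⁰ M) s
  rw [← N.heightTwoSaturation_eq] at hT
  subst hT
  simpa only [← LinearMap.coe_range, SetLike.mem_coe] using
    N.exists_heightTwoSaturation_eq_inter hs c.2 hc

/-- for a finitely generated torsion-free module `M` over a
Noetherian ring `R`, if `M̃` is a finitely generated `R`-module, then there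
exist non-zerodivisors `a, b` with `M̃ = M/a ∩ M/b` inside `V = Q(R) ⊗ M`. -/
theorem stmt16 {R : Type*} [CommRing R] [IsNoetherianRing R]
    {M : Type*} [AddCommGroup M] [Module R M] [Module.Finite R M]
    (htf : ∀ r ∈ nonZeroDivisors R, Function.Injective fun x : M => r • x)
    (T : Set (LocalizedModule (nonZeroDivisors R) M))
    (hT : T = {f | ∃ I : Ideal R, 2 ≤ idealHt I ∧ ∀ i ∈ I,
      i • f ∈ LinearMap.range (LocalizedModule.mkLinearMap (nonZeroDivisors R) M)})
    (hfg : ∃ s : Finset (LocalizedModule (nonZeroDivisors R) M),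
      T = ↑(Submodule.span R (↑s : Set (LocalizedModule (nonZeroDivisors R) M)))) :
    ∃ a ∈ nonZeroDivisors R, ∃ b ∈ nonZeroDivisors R,
      T = {f | a • f ∈ Set.range (LocalizedModule.mkLinearMap (nonZeroDivisors R) M)} ∩
          {f | b • f ∈ Set.range (LocalizedModule.mkLinearMap (nonZeroDivisors R) M)} :=
  stmt16_general T hT hfg
end

section
/- Let $R$ be a commutative ring with total quotient ring $\mathrm{Q}(R)$ and integral closure $\overline{R}$. The following are equivalent: (1) for all $x,y,z\in R$ with $x$ a non-zerodivisor, if $y/x,z/x\in\overline{R}$ then $yz/x\in R$; (2) $\overline{aR}^{\,2}=a\,\overline{aR}$ for every non-zerodivisor $a$ of $R$; (3) $\frac{R}{a}\cap\overline{R}$ is a subring of $\overline{R}$ for every non-zerodivisor $a$ of $R$. -/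
/-- The integral closure `\overline{aR} = aR̄ ∩ R` of the principal ideal `aR`:
the elements `x ∈ R` with `x/a` integral over `R` in the total quotient ring. -/
noncomputable def intClPrincipal (R : Type*) [CommRing R] (a : R) : Ideal R where
  carrier := {x | ∃ u : FractionRing R, IsIntegral R u ∧
    algebraMap R (FractionRing R) x = algebraMap R (FractionRing R) a * u}
  add_mem' := by
    rintro x y ⟨u, hu, hx⟩ ⟨v, hv, hy⟩
    exact ⟨u + v, hu.add hv, by rw [map_add, hx, hy]; ring⟩
  zero_mem' := ⟨0, isIntegral_zero, by simp⟩
  smul_mem' := by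
    rintro c x ⟨u, hu, hx⟩
    exact ⟨algebraMap R (FractionRing R) c * u, (isIntegral_algebraMap).mul hu, by
      rw [smul_eq_mul, map_mul, hx]; ring⟩

/-- equivalence of the three characterizations of the weakly Arf
property: (1) for `x` a non-zerodivisor and `y/x, z/x ∈ R̄`, one has
`yz/x ∈ R`; (2) `\overline{aR}² = a·\overline{aR}` for all non-zerodivisors
`a`; (3) `R/a ∩ R̄` is a subring of `R̄` (equivalently of `Q(R)`) for all
non-zerodivisors `a`. -/
theorem stmt17 {R : Type*} [CommRing R] :
    ((∀ x y z : R, x ∈ nonZeroDivisors R →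
        (∃ u : FractionRing R, IsIntegral R u ∧
          algebraMap R (FractionRing R) y = algebraMap R (FractionRing R) x * u) →
        (∃ v : FractionRing R, IsIntegral R v ∧
          algebraMap R (FractionRing R) z = algebraMap R (FractionRing R) x * v) →
        ∃ w : R, y * z = x * w) ↔
      (∀ a ∈ nonZeroDivisors R,
        intClPrincipal R a * intClPrincipal R a = Ideal.span {a} * intClPrincipal R a)) ∧
    ((∀ a ∈ nonZeroDivisors R,
        intClPrincipal R a * intClPrincipal R a = Ideal.span {a} * intClPrincipal R a) ↔
      (∀ a ∈ nonZeroDivisors R, ∃ S : Subring (FractionRing R),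
        (S : Set (FractionRing R)) =
          {f | ∃ r : R, a • f = algebraMap R (FractionRing R) r} ∩
            {f | IsIntegral R f})) := by
  set K := FractionRing R with hK
  have inj : Function.Injective (algebraMap R K) := IsFractionRing.injective R K
  have hcancel : ∀ a ∈ nonZeroDivisors R, ∀ u v : K,
      algebraMap R K a * u = algebraMap R K a * v → u = v := by
    intro a ha u v h
    have hu : IsUnit (algebraMap R K a) :=
      IsLocalization.map_units (M := nonZeroDivisors R) K ⟨a, ha⟩
    exact hu.mul_left_cancel h
  have amem : ∀ a : R, a ∈ intClPrincipal R a :=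
    fun a => ⟨1, isIntegral_one, by simp⟩
  have h12 : (∀ x y z : R, x ∈ nonZeroDivisors R →
        (∃ u : K, IsIntegral R u ∧
          algebraMap R K y = algebraMap R K x * u) →
        (∃ v : K, IsIntegral R v ∧
          algebraMap R K z = algebraMap R K x * v) →
        ∃ w : R, y * z = x * w) →
      (∀ a ∈ nonZeroDivisors R,
        intClPrincipal R a * intClPrincipal R a = Ideal.span {a} * intClPrincipal R a) := by
    intro H1 a ha
    apply le_antisymm
    · rw [Ideal.mul_le]
      rintro y ⟨u, hu, hyu⟩ z ⟨v, hv, hzv⟩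
      obtain ⟨w, hw⟩ := H1 a y z ha ⟨u, hu, hyu⟩ ⟨v, hv, hzv⟩
      have hwmem : w ∈ intClPrincipal R a := by
        refine ⟨u * v, hu.mul hv, hcancel a ha _ _ ?_⟩
        rw [← map_mul, ← hw, map_mul, hyu, hzv]; ring
      rw [hw]
      exact Ideal.mul_mem_mul (Ideal.mem_span_singleton_self a) hwmem
    · exact Ideal.mul_mono_left (Ideal.span_le.mpr (by simpa using amem a))
  have h23 : (∀ a ∈ nonZeroDivisors R,
        intClPrincipal R a * intClPrincipal R a = Ideal.span {a} * intClPrincipal R a) →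
      (∀ a ∈ nonZeroDivisors R, ∃ S : Subring K,
        (S : Set K) = {f | ∃ r : R, a • f = algebraMap R K r} ∩ {f | IsIntegral R f}) := by
    intro H2 a ha
    refine ⟨{ carrier := {f | ∃ r : R, a • f = algebraMap R K r} ∩ {f | IsIntegral R f}
              one_mem' := ⟨⟨a, by simp [Algebra.smul_def]⟩, isIntegral_one⟩
              zero_mem' := ⟨⟨0, by simp⟩, isIntegral_zero⟩
              add_mem' := ?_
              neg_mem' := ?_
              mul_mem' := ?_ }, rfl⟩
    rotate_left
    · rintro f g ⟨⟨r, hr⟩, hf⟩ ⟨⟨s, hs⟩, hg⟩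
      exact ⟨⟨r + s, by rw [smul_add, hr, hs, map_add]⟩, hf.add hg⟩
    · rintro f ⟨⟨r, hr⟩, hf⟩
      exact ⟨⟨-r, by rw [smul_neg, hr, map_neg]⟩, hf.neg⟩
    · rintro f g ⟨⟨r, hr⟩, hf⟩ ⟨⟨s, hs⟩, hg⟩
      rw [Algebra.smul_def] at hr hs
      have hrmem : r ∈ intClPrincipal R a := ⟨f, hf, hr.symm⟩
      have hsmem : s ∈ intClPrincipal R a := ⟨g, hg, hs.symm⟩
      have hrs : r * s ∈ Ideal.span {a} * intClPrincipal R a := by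
        rw [← H2 a ha]; exact Ideal.mul_mem_mul hrmem hsmem
      rw [Ideal.mem_span_singleton_mul] at hrs
      obtain ⟨t, htmem, ht⟩ := hrs
      obtain ⟨wt, hwt, htw⟩ := htmem
      refine ⟨⟨t, ?_⟩, hf.mul hg⟩
      rw [Algebra.smul_def]
      apply hcancel a ha
      calc algebraMap R K a * (algebraMap R K a * (f * g))
          = (algebraMap R K a * f) * (algebraMap R K a * g) := by ring
        _ = algebraMap R K (r * s) := by rw [map_mul, ← hr, ← hs]
        _ = algebraMap R K (a * t) := by rw [← ht]
        _ = algebraMap R K a * algebraMap R K t := by rw [map_mul]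
  have h31 : (∀ a ∈ nonZeroDivisors R, ∃ S : Subring K,
        (S : Set K) = {f | ∃ r : R, a • f = algebraMap R K r} ∩ {f | IsIntegral R f}) →
      (∀ x y z : R, x ∈ nonZeroDivisors R →
        (∃ u : K, IsIntegral R u ∧
          algebraMap R K y = algebraMap R K x * u) →
        (∃ v : K, IsIntegral R v ∧
          algebraMap R K z = algebraMap R K x * v) →
        ∃ w : R, y * z = x * w) := by
    rintro H3 x y z hx ⟨u, hu, hyu⟩ ⟨v, hv, hzv⟩
    obtain ⟨S, hS⟩ := H3 x hx
    have humem : u ∈ S := by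
      rw [← SetLike.mem_coe, hS]
      exact ⟨⟨y, by rw [Algebra.smul_def, ← hyu]⟩, hu⟩
    have hvmem : v ∈ S := by
      rw [← SetLike.mem_coe, hS]
      exact ⟨⟨z, by rw [Algebra.smul_def, ← hzv]⟩, hv⟩
    have hmul : u * v ∈ (S : Set K) := S.mul_mem humem hvmem
    rw [hS] at hmul
    obtain ⟨⟨w, hw⟩, -⟩ := hmul
    rw [Algebra.smul_def] at hw
    refine ⟨w, inj ?_⟩
    calc algebraMap R K (y * z) = algebraMap R K y * algebraMap R K z := map_mul _ _ _
      _ = algebraMap R K x * (algebraMap R K x * (u * v)) := by rw [hyu, hzv]; ring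
      _ = algebraMap R K x * algebraMap R K w := by rw [hw]
      _ = algebraMap R K (x * w) := (map_mul _ _ _).symm
  exact ⟨⟨h12, fun h => h31 (h23 h)⟩, ⟨h23, fun h => h12 (h31 h)⟩⟩
end

section
/- Let $k$ be a field, $T=k[X,Y]$, and $A=k[X^5,XY^4,Y^5,X^9Y^6,X^8Y^7,X^4Y^{11}]\subseteq T$. Set $a=Y^{10}$ and $b=X^5$. Then $aA:_A b=aA:_A b^2=(Y^{10},X^3Y^{17},X^4Y^{16})A$, and consequently $\frac{A}{a}\cap\frac{A}{b}=A[X^3Y^7,X^4Y^6]=k[X^5,XY^4,Y^5,X^3Y^7,X^4Y^6]$ inside $\mathrm{Q}(A)$. -/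
set_option synthInstance.maxHeartbeats 1000000
set_option maxHeartbeats 4000000

open MvPolynomial

/-- The subring `A = k[X⁵, XY⁴, Y⁵, X⁹Y⁶, X⁸Y⁷, X⁴Y¹¹]` of `T = k[X,Y]`. -/
noncomputable def subA (k : Type*) [Field k] : Subalgebra k (MvPolynomial (Fin 2) k) :=
  Algebra.adjoin k
    {X 0 ^ 5, X 0 * X 1 ^ 4, X 1 ^ 5, X 0 ^ 9 * X 1 ^ 6, X 0 ^ 8 * X 1 ^ 7,
      X 0 ^ 4 * X 1 ^ 11}

/-!
`A` is the monomial algebra of the semigroup `S ⊆ ℕ²` generated by the six exponents, and `S` has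
an explicit arithmetic description. As `A` and the principal ideals of monomials are spanned
by monomials, `z ∈ aA :_A b²` forces every exponent `e` of `z` to satisfy `e + (10, -10) ∈ S`, and
such an `e` lies in `(0, 10) + S` unless `e = (3, 17)` or `e = (4, 16)`. This gives
`aA :_A b² ⊆ (a, c, d) ⊆ aA :_A b ⊆ aA :_A b²`.

In `Q(A)`, `A/a ∩ A/b = (aA :_A b)/a = A + Au + Av`, which is already the ring `A[u, v]` because
`u² = X⁶Y¹⁴`, `uv = X⁷Y¹³` and `v² = X⁸Y¹²` lie in `A`. Finally `X⁹Y⁶ = X⁵v`, `X⁸Y⁷ = X⁵u` and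
`X⁴Y¹¹ = Y⁵v`, so `A[u, v] = k[X⁵, XY⁴, Y⁵, u, v]`.
-/

namespace MvPolynomial

variable {σ R : Type*} [CommSemiring R]

theorem mem_adjoin_monomial_one_iff (G : Set (σ →₀ ℕ)) {p : MvPolynomial σ R} :
    p ∈ Algebra.adjoin R ((monomial · 1) '' G) ↔
      ↑p.support ⊆ (AddSubmonoid.closure G : Set (σ →₀ ℕ)) := by
  rw [← mem_restrictSupport_iff]
  constructor
  · intro hp
    induction hp using Algebra.adjoin_induction with
    | mem x hx =>
      obtain ⟨g, hg, rfl⟩ := hx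
      exact (monomial_mem_restrictSupport R).2 (.inl (AddSubmonoid.subset_closure hg))
    | algebraMap r =>
      exact (monomial_mem_restrictSupport R).2 (.inl (zero_mem _))
    | add x y _ _ hx hy => exact add_mem hx hy
    | mul x y _ _ hx hy =>
      refine restrictSupport_mono R ?_ (restrictSupport_add R _ _ ▸ Submodule.mul_mem_mul hx hy)
      rintro _ ⟨e, he, f, hf, rfl⟩
      exact add_mem he hf
  · intro hp
    rw [restrictSupport_eq_span] at hp
    rw [← Subalgebra.mem_toSubmodule]
    refine Submodule.span_le.mpr ?_ hp
    rintro _ ⟨e, he, rfl⟩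
    rw [SetLike.mem_coe, Subalgebra.mem_toSubmodule]
    induction he using AddSubmonoid.closure_induction with
    | mem e he => exact Algebra.subset_adjoin ⟨e, he, rfl⟩
    | zero => exact one_mem _
    | add e f _ _ he hf => simpa only [monomial_mul, one_mul] using mul_mem he hf

theorem le_add_and_mem_support_of_monomial_mul_eq {α β e : σ →₀ ℕ} {z w : MvPolynomial σ R}
    (h : monomial β 1 * z = monomial α 1 * w) (he : e ∈ z.support) :
    α ≤ β + e ∧ β + e - α ∈ w.support := by
  have hcoeff := congrArg (coeff (β + e)) h
  rw [coeff_monomial_mul, one_mul, coeff_monomial_mul'] at hcoeff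
  split_ifs at hcoeff with hle
  · rw [one_mul] at hcoeff
    exact ⟨hle, mem_support_iff.2 (hcoeff ▸ mem_support_iff.1 he)⟩
  · exact absurd hcoeff (mem_support_iff.1 he)

theorem mem_span_of_forall_mem_support {A : Subalgebra R (MvPolynomial σ R)} {s : Set A} {z : A}
    (hz : ∀ e ∈ (z : MvPolynomial σ R).support, ∃ g ∈ s, ∃ γ f : σ →₀ ℕ,
      (g : MvPolynomial σ R) = monomial γ 1 ∧ monomial f 1 ∈ A ∧ e = γ + f) :
    z ∈ Ideal.span s := by
  suffices (z : MvPolynomial σ R) ∈ ((Ideal.span s).restrictScalars R).map A.val.toLinearMap by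
    obtain ⟨y, hy, hyz⟩ := this
    rwa [← Subtype.ext hyz]
  rw [(z : MvPolynomial σ R).as_sum]
  refine Submodule.sum_mem _ fun e he => ?_
  obtain ⟨g, hg, γ, f, hgγ, hf, rfl⟩ := hz _ he
  refine ⟨⟨C (coeff (γ + f) z) * monomial f 1, mul_mem (A.algebraMap_mem _) hf⟩ * g,
    Ideal.mul_mem_left _ _ (Ideal.subset_span hg), ?_⟩
  simp [hgγ, monomial_mul, C_mul_monomial, add_comm]

end MvPolynomial

theorem Algebra.adjoin_toSubmodule_eq_span_insert_one {R B : Type*} [CommSemiring R] [Semiring B]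
    [Algebra R B] {t : Set B}
    (ht : ∀ x ∈ t, ∀ y ∈ t, x * y ∈ Submodule.span R (insert 1 t)) :
    Subalgebra.toSubmodule (Algebra.adjoin R t) = Submodule.span R (insert 1 t) := by
  set M := Submodule.span R (insert 1 t)
  have hM : M * M ≤ M := by
    rw [Submodule.span_mul_span, Submodule.span_le]
    rintro _ ⟨x, hx, y, hy, rfl⟩
    rcases hx with rfl | hx
    · simpa using Submodule.subset_span hy
    rcases hy with rfl | hy
    · simpa using Submodule.subset_span (Set.mem_insert_of_mem _ hx)
    · exact ht x hx y hy
  refine le_antisymm ?_ (Submodule.span_le.2 ?_)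
  · exact Algebra.adjoin_le (S := M.toSubalgebra (Submodule.subset_span (Set.mem_insert _ _))
      fun x y hx hy => hM (Submodule.mul_mem_mul hx hy))
      fun x hx => Submodule.subset_span (Set.mem_insert_of_mem _ hx)
  · rintro x (rfl | hx)
    · exact one_mem (Algebra.adjoin R t)
    · exact Algebra.subset_adjoin hx

theorem Algebra.adjoin_preimage_val_eq_top {R B : Type*} [CommSemiring R] [Semiring B]
    [Algebra R B] (s : Set B) :
    Algebra.adjoin R (Subtype.val ⁻¹' s : Set (Algebra.adjoin R s)) = ⊤ := by
  apply Subalgebra.map_injective (f := (Algebra.adjoin R s).val) Subtype.val_injective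
  rw [AlgHom.map_adjoin, Algebra.map_top, Subalgebra.range_val, Subalgebra.coe_val,
    Set.image_preimage_eq_of_subset (Subtype.range_coe.symm ▸ Algebra.subset_adjoin)]

section Domain

variable {A K : Type*} [CommRing A] [CommRing K] [IsDomain K] [Algebra A K]

theorem algebraMap_eq_mul_of_mul_eq {a c x y : A} {u : K} (ha : algebraMap A K a ≠ 0)
    (hu : algebraMap A K a * u = algebraMap A K c) (h : a * x = y * c) :
    algebraMap A K x = algebraMap A K y * u := by
  have hmap := congrArg (algebraMap A K) h
  rw [map_mul, map_mul] at hmap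
  refine mul_left_cancel₀ ha ?_
  linear_combination hmap - algebraMap A K y * hu

theorem mul_eq_algebraMap_of_mul_eq {a c d x : A} {u v : K} (ha : algebraMap A K a ≠ 0)
    (hu : algebraMap A K a * u = algebraMap A K c) (hv : algebraMap A K a * v = algebraMap A K d)
    (h : a * a * x = c * d) : u * v = algebraMap A K x := by
  have hmap := congrArg (algebraMap A K) h
  rw [map_mul, map_mul, map_mul] at hmap
  refine mul_left_cancel₀ (mul_ne_zero ha ha) ?_
  linear_combination (algebraMap A K a * v) * hu + algebraMap A K c * hv - hmap

theorem inter_setOf_mul_eq_colon [IsFractionRing A K] {a b : A} (ha : a ≠ 0) :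
    {f : K | ∃ r : A, algebraMap A K a * f = algebraMap A K r} ∩
        {f | ∃ r : A, algebraMap A K b * f = algebraMap A K r} =
      {f | ∃ r ∈ (Ideal.span {a}).colon (Ideal.span {b}),
        algebraMap A K a * f = algebraMap A K r} := by
  have hinj := IsFractionRing.injective A K
  have ha' : algebraMap A K a ≠ 0 := (map_ne_zero_iff _ hinj).2 ha
  ext f
  simp only [Set.mem_inter_iff, Set.mem_ofPred_eq, Ideal.mem_colon_span_singleton,
    Ideal.mem_span_singleton']
  constructor
  · rintro ⟨⟨r, hr⟩, ⟨s, hs⟩⟩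
    refine ⟨r, ⟨s, hinj ?_⟩, hr⟩
    rw [map_mul, map_mul]
    linear_combination algebraMap A K b * hr - algebraMap A K a * hs
  · rintro ⟨r, ⟨s, hs⟩, hr⟩
    refine ⟨⟨r, hr⟩, s, mul_left_cancel₀ ha' ?_⟩
    have := congrArg (algebraMap A K) hs
    rw [map_mul, map_mul] at this
    linear_combination algebraMap A K b * hr - this

theorem setOf_mul_mem_span_insert_eq_span {a : A} (ha : algebraMap A K a ≠ 0) {s : Set A}
    {t : Set K} (hst : algebraMap A K '' s = (algebraMap A K a * ·) '' t) :
    {f : K | ∃ r ∈ Ideal.span (insert a s), algebraMap A K a * f = algebraMap A K r} =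
      Submodule.span A (insert 1 t) := by
  -- multiplication by `a` is injective and maps `span A (insert 1 t)` onto the image of the ideal
  set L := LinearMap.mulLeft A (algebraMap A K a)
  have hL : Function.Injective L := mul_right_injective₀ ha
  have himage : L '' insert 1 t = Algebra.linearMap A K '' insert a s := by
    rw [Set.image_insert_eq, Set.image_insert_eq, Algebra.coe_linearMap, hst]
    simp only [L, LinearMap.mulLeft_apply, mul_one]
    rfl
  ext f
  rw [SetLike.mem_coe, ← Submodule.comap_map_eq_of_injective hL (Submodule.span A (insert 1 t)),
    Submodule.mem_comap, Submodule.map_span, himage, ← Submodule.map_span, Submodule.mem_map,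
    Ideal.span]
  simp [L, eq_comm]

end Domain

noncomputable abbrev bideg (m n : ℕ) : Fin 2 →₀ ℕ := Finsupp.single 0 m + Finsupp.single 1 n

theorem eq_bideg (e : Fin 2 →₀ ℕ) : e = bideg (e 0) (e 1) := by
  ext i
  fin_cases i <;> simp

theorem X_pow_mul_X_pow_eq_monomial {R : Type*} [CommSemiring R] (m n : ℕ) :
    (X 0 ^ m * X 1 ^ n : MvPolynomial (Fin 2) R) = monomial (bideg m n) 1 := by
  rw [X_pow_eq_monomial, X_pow_eq_monomial, monomial_mul, one_mul]

/-- `X^m Y^n ∈ A`: the generators `X⁵, XY⁴, Y⁵` give all `(m, n)` with `m + n ≡ 0 (mod 5)` and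
`n ≥ 4 (m mod 5)`, and the other three generators only add the rays `(8, 7)`, `(4, 11)` and
`(9, 6) + ℕ (5, 0)`. -/
def IsExponentOfA (m n : ℕ) : Prop :=
  (m + n) % 5 = 0 ∧ (4 * (m % 5) ≤ n ∨ (8 ≤ m ∧ n = 7) ∨ (4 ≤ m ∧ n = 11) ∨ (9 ≤ m ∧ n = 6))

def exponentsA : AddSubmonoid (Fin 2 →₀ ℕ) where
  carrier := {e | IsExponentOfA (e 0) (e 1)}
  add_mem' {e f} he hf := by
    obtain ⟨he5, he | he | he | he⟩ := he <;> obtain ⟨hf5, hf | hf | hf | hf⟩ := hf <;>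
      simp only [Set.mem_ofPred_eq, Finsupp.coe_add, Pi.add_apply, IsExponentOfA] <;> omega
  zero_mem' := by simp [IsExponentOfA]

def generatorsA : Set (Fin 2 →₀ ℕ) :=
  {bideg 5 0, bideg 1 4, bideg 0 5, bideg 9 6, bideg 8 7, bideg 4 11}

theorem bideg_mem_closure_generatorsA {m n : ℕ} (h5 : (m + n) % 5 = 0) (h4 : 4 * (m % 5) ≤ n) :
    bideg m n ∈ AddSubmonoid.closure generatorsA := by
  have hdecomp : bideg m n =
      (m / 5) • bideg 5 0 + (m % 5) • bideg 1 4 + ((n - 4 * (m % 5)) / 5) • bideg 0 5 := by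
    ext i
    fin_cases i <;> simp <;> omega
  rw [hdecomp]
  refine add_mem (add_mem ?_ ?_) ?_ <;>
    exact AddSubmonoid.nsmul_mem _ (AddSubmonoid.subset_closure (by simp [generatorsA])) _

theorem bideg_mem_closure_of_le {m n m₀ n₀ : ℕ} (hg : bideg m₀ n₀ ∈ generatorsA) (hm : m₀ ≤ m)
    (hn : n₀ ≤ n) (h5 : (m - m₀ + (n - n₀)) % 5 = 0) (h4 : 4 * ((m - m₀) % 5) ≤ n - n₀) :
    bideg m n ∈ AddSubmonoid.closure generatorsA := by
  rw [show bideg m n = bideg m₀ n₀ + bideg (m - m₀) (n - n₀) by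
    ext i; fin_cases i <;> simp <;> omega]
  exact add_mem (AddSubmonoid.subset_closure hg) (bideg_mem_closure_generatorsA h5 h4)

theorem closure_generatorsA : AddSubmonoid.closure generatorsA = exponentsA := by
  refine le_antisymm (AddSubmonoid.closure_le.2 ?_) fun e he => ?_
  · simp [generatorsA, Set.insert_subset_iff, exponentsA, IsExponentOfA]
  rw [eq_bideg e]
  obtain ⟨h5, h | ⟨hm, hn⟩ | ⟨hm, hn⟩ | ⟨hm, hn⟩⟩ := he
  · exact bideg_mem_closure_generatorsA h5 h
  · exact bideg_mem_closure_of_le (m₀ := 8) (n₀ := 7) (by simp [generatorsA]) hm hn.ge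
      (by omega) (by omega)
  · exact bideg_mem_closure_of_le (m₀ := 4) (n₀ := 11) (by simp [generatorsA]) hm hn.ge
      (by omega) (by omega)
  · exact bideg_mem_closure_of_le (m₀ := 9) (n₀ := 6) (by simp [generatorsA]) hm hn.ge
      (by omega) (by omega)

section subA

variable {k : Type*} [Field k]

theorem subA_eq_adjoin_monomial :
    subA k = Algebra.adjoin k ((monomial · 1) '' generatorsA) := by
  simp only [subA, generatorsA, Set.image_insert_eq, Set.image_singleton,
    ← X_pow_mul_X_pow_eq_monomial, pow_zero, pow_one, mul_one, one_mul]

theorem mem_subA_iff {p : MvPolynomial (Fin 2) k} :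
    p ∈ subA k ↔ ∀ e ∈ p.support, IsExponentOfA (e 0) (e 1) := by
  rw [subA_eq_adjoin_monomial, mem_adjoin_monomial_one_iff, closure_generatorsA]
  rfl

theorem monomial_one_mem_subA {e : Fin 2 →₀ ℕ} (he : IsExponentOfA (e 0) (e 1)) :
    monomial e 1 ∈ subA k :=
  mem_subA_iff.2 fun f hf => by rwa [Finset.mem_singleton.1 (support_monomial_subset hf)]

theorem X_pow_mul_X_pow_mem_subA {m n : ℕ} (h : IsExponentOfA m n) :
    (X 0 ^ m * X 1 ^ n : MvPolynomial (Fin 2) k) ∈ subA k := by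
  rw [X_pow_mul_X_pow_eq_monomial]
  exact monomial_one_mem_subA (by simpa using h)

end subA

theorem IsExponentOfA.of_add_ten {m n : ℕ} (h : IsExponentOfA (m + 10) (n - 10)) (hn : 10 ≤ n) :
    IsExponentOfA m (n - 10) ∨ (m = 3 ∧ n = 17) ∨ (m = 4 ∧ n = 16) := by
  unfold IsExponentOfA at *
  omega

section colon

variable {k : Type*} [Field k] {a b c d : subA k}

theorem span_le_colon (ha : (a : MvPolynomial (Fin 2) k) = X 1 ^ 10)
    (hb : (b : MvPolynomial (Fin 2) k) = X 0 ^ 5)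
    (hc : (c : MvPolynomial (Fin 2) k) = X 0 ^ 3 * X 1 ^ 17)
    (hd : (d : MvPolynomial (Fin 2) k) = X 0 ^ 4 * X 1 ^ 16) :
    Ideal.span {a, c, d} ≤ (Ideal.span {a}).colon (Ideal.span {b}) := by
  rw [Ideal.span_le]
  rintro x (rfl | rfl | rfl) <;>
    rw [SetLike.mem_coe, Ideal.mem_colon_span_singleton, Ideal.mem_span_singleton']
  · exact ⟨b, mul_comm _ _⟩
  · refine ⟨⟨X 0 ^ 8 * X 1 ^ 7, X_pow_mul_X_pow_mem_subA (by norm_num [IsExponentOfA])⟩,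
      Subtype.ext ?_⟩
    push_cast
    rw [ha, hb, hc]
    ring
  · refine ⟨⟨X 0 ^ 9 * X 1 ^ 6, X_pow_mul_X_pow_mem_subA (by norm_num [IsExponentOfA])⟩,
      Subtype.ext ?_⟩
    push_cast
    rw [ha, hb, hd]
    ring

theorem colon_sq_le_span (ha : (a : MvPolynomial (Fin 2) k) = X 1 ^ 10)
    (hb : (b : MvPolynomial (Fin 2) k) = X 0 ^ 5)
    (hc : (c : MvPolynomial (Fin 2) k) = X 0 ^ 3 * X 1 ^ 17)
    (hd : (d : MvPolynomial (Fin 2) k) = X 0 ^ 4 * X 1 ^ 16) :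
    (Ideal.span {a}).colon (Ideal.span {b ^ 2}) ≤ Ideal.span {a, c, d} := by
  intro z hz
  obtain ⟨w, hw⟩ := Ideal.mem_span_singleton'.1 (Ideal.mem_colon_span_singleton.1 hz)
  have hwz : monomial (bideg 10 0) 1 * (z : MvPolynomial (Fin 2) k) =
      monomial (bideg 0 10) 1 * (w : MvPolynomial (Fin 2) k) := by
    have := congrArg Subtype.val hw
    push_cast at this
    rw [← X_pow_mul_X_pow_eq_monomial, ← X_pow_mul_X_pow_eq_monomial]
    rw [ha, hb] at this
    linear_combination -this
  refine mem_span_of_forall_mem_support fun e he => ?_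
  obtain ⟨hle, hw'⟩ := le_add_and_mem_support_of_monomial_mul_eq hwz he
  have hexp : IsExponentOfA (e 0 + 10) (e 1 - 10) := by
    simpa [add_comm] using mem_subA_iff.1 w.2 _ hw'
  have h10 : 10 ≤ e 1 := by simpa using hle 1
  rcases hexp.of_add_ten h10 with h | ⟨h0, h1⟩ | ⟨h0, h1⟩
  · refine ⟨a, by simp, bideg 0 10, bideg (e 0) (e 1 - 10), ?_,
      monomial_one_mem_subA (by simpa using h), ?_⟩
    · rw [ha, ← X_pow_mul_X_pow_eq_monomial, pow_zero, one_mul]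
    · ext i
      fin_cases i <;> simp
      omega
  · refine ⟨c, by simp, bideg 3 17, 0, by rw [hc, X_pow_mul_X_pow_eq_monomial],
      by simp [one_mem], ?_⟩
    ext i
    fin_cases i <;> simp [h0, h1]
  · refine ⟨d, by simp, bideg 4 16, 0, by rw [hd, X_pow_mul_X_pow_eq_monomial],
      by simp [one_mem], ?_⟩
    ext i
    fin_cases i <;> simp [h0, h1]

end colon

section fractions

variable {k K : Type*} [Field k] [CommRing K] [IsDomain K] [Algebra (subA k) K]
  {a c d : subA k} {u v : K}

theorem mul_mem_span_insert_one (ha : (a : MvPolynomial (Fin 2) k) = X 1 ^ 10)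
    (hc : (c : MvPolynomial (Fin 2) k) = X 0 ^ 3 * X 1 ^ 17)
    (hd : (d : MvPolynomial (Fin 2) k) = X 0 ^ 4 * X 1 ^ 16)
    (ha' : algebraMap (subA k) K a ≠ 0)
    (hu : algebraMap (subA k) K a * u = algebraMap (subA k) K c)
    (hv : algebraMap (subA k) K a * v = algebraMap (subA k) K d) :
    ∀ x ∈ ({u, v} : Set K), ∀ y ∈ ({u, v} : Set K),
      x * y ∈ Submodule.span (subA k) {1, u, v} := by
  have key : ∀ {x y : K} {c' d' : subA k}, algebraMap (subA k) K a * x = algebraMap (subA k) K c' →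
      algebraMap (subA k) K a * y = algebraMap (subA k) K d' → ∀ m n, IsExponentOfA m n →
      (c' * d' : MvPolynomial (Fin 2) k) = X 1 ^ 20 * (X 0 ^ m * X 1 ^ n) →
      x * y ∈ Submodule.span (subA k) {1, u, v} := by
    intro x y c' d' hx hy m n hmn h
    rw [mul_eq_algebraMap_of_mul_eq ha' hx hy
      (x := ⟨_, X_pow_mul_X_pow_mem_subA hmn⟩) (Subtype.ext (by push_cast; rw [ha, h]; ring)),
      Algebra.algebraMap_eq_smul_one]
    exact Submodule.smul_mem _ _ (Submodule.subset_span (Set.mem_insert _ _))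
  rintro x (rfl | rfl) y (rfl | rfl)
  · exact key hu hu 6 14 (by norm_num [IsExponentOfA]) (by rw [hc]; ring)
  · exact key hu hv 7 13 (by norm_num [IsExponentOfA]) (by rw [hc, hd]; ring)
  · exact key hv hu 7 13 (by norm_num [IsExponentOfA]) (by rw [hc, hd]; ring)
  · exact key hv hv 8 12 (by norm_num [IsExponentOfA]) (by rw [hd]; ring)

theorem restrictScalars_adjoin_eq_adjoin [Algebra k K] [IsScalarTower k (subA k) K]
    {p q r : subA k} (ha : (a : MvPolynomial (Fin 2) k) = X 1 ^ 10)
    (hc : (c : MvPolynomial (Fin 2) k) = X 0 ^ 3 * X 1 ^ 17)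
    (hd : (d : MvPolynomial (Fin 2) k) = X 0 ^ 4 * X 1 ^ 16)
    (hp : (p : MvPolynomial (Fin 2) k) = X 0 ^ 5)
    (hq : (q : MvPolynomial (Fin 2) k) = X 0 * X 1 ^ 4)
    (hr : (r : MvPolynomial (Fin 2) k) = X 1 ^ 5)
    (ha' : algebraMap (subA k) K a ≠ 0)
    (hu : algebraMap (subA k) K a * u = algebraMap (subA k) K c)
    (hv : algebraMap (subA k) K a * v = algebraMap (subA k) K d) :
    (Algebra.adjoin (subA k) {u, v}).restrictScalars k =
      Algebra.adjoin k {algebraMap (subA k) K p, algebraMap (subA k) K q,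
        algebraMap (subA k) K r, u, v} := by
  have htop : Algebra.adjoin k (Subtype.val ⁻¹' {X 0 ^ 5, X 0 * X 1 ^ 4, X 1 ^ 5,
      X 0 ^ 9 * X 1 ^ 6, X 0 ^ 8 * X 1 ^ 7, X 0 ^ 4 * X 1 ^ 11} : Set (subA k)) = ⊤ :=
    Algebra.adjoin_preimage_val_eq_top _
  rw [Algebra.adjoin_eq_adjoin_union k _ _ htop]
  set B := Algebra.adjoin k
    {algebraMap (subA k) K p, algebraMap (subA k) K q, algebraMap (subA k) K r, u, v}
  have hpB : algebraMap (subA k) K p ∈ B := Algebra.subset_adjoin (.inl rfl)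
  have hqB : algebraMap (subA k) K q ∈ B := Algebra.subset_adjoin (.inr (.inl rfl))
  have hrB : algebraMap (subA k) K r ∈ B := Algebra.subset_adjoin (.inr (.inr (.inl rfl)))
  have huB : u ∈ B := Algebra.subset_adjoin (.inr (.inr (.inr (.inl rfl))))
  have hvB : v ∈ B := Algebra.subset_adjoin (.inr (.inr (.inr (.inr rfl))))
  refine le_antisymm (Algebra.adjoin_le ?_) (Algebra.adjoin_le ?_)
  · rintro _ (⟨x, hx, rfl⟩ | rfl | rfl)
    · simp only [Set.mem_preimage, Set.mem_insert_iff, Set.mem_singleton_iff] at hx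
      rcases hx with h | h | h | h | h | h
      · rwa [Subtype.ext (h.trans hp.symm)]
      · rwa [Subtype.ext (h.trans hq.symm)]
      · rwa [Subtype.ext (h.trans hr.symm)]
      · rw [algebraMap_eq_mul_of_mul_eq ha' hv (x := x) (y := p)
          (Subtype.ext (by push_cast; rw [h, ha, hp, hd]; ring))]
        exact mul_mem hpB hvB
      · rw [algebraMap_eq_mul_of_mul_eq ha' hu (x := x) (y := p)
          (Subtype.ext (by push_cast; rw [h, ha, hp, hc]; ring))]
        exact mul_mem hpB huB
      · rw [algebraMap_eq_mul_of_mul_eq ha' hv (x := x) (y := r)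
          (Subtype.ext (by push_cast; rw [h, ha, hr, hd]; ring))]
        exact mul_mem hrB hvB
    · exact huB
    · exact hvB
  · rintro _ (rfl | rfl | rfl | rfl | rfl)
    · exact Algebra.subset_adjoin (.inl ⟨p, .inl hp, rfl⟩)
    · exact Algebra.subset_adjoin (.inl ⟨q, .inr (.inl hq), rfl⟩)
    · exact Algebra.subset_adjoin (.inl ⟨r, .inr (.inr (.inl hr)), rfl⟩)
    · exact Algebra.subset_adjoin (.inr (.inl rfl))
    · exact Algebra.subset_adjoin (.inr (.inr rfl))

end fractions

/-- with `A = k[X⁵,XY⁴,Y⁵,X⁹Y⁶,X⁸Y⁷,X⁴Y¹¹]`, `a = Y¹⁰`,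
`b = X⁵`: `aA :_A b = aA :_A b² = (Y¹⁰, X³Y¹⁷, X⁴Y¹⁶)A`, and consequently
`A/a ∩ A/b = A[X³Y⁷, X⁴Y⁶] = k[X⁵,XY⁴,Y⁵,X³Y⁷,X⁴Y⁶]` inside `Q(A)`, where
`X³Y⁷` and `X⁴Y⁶` are the elements `u = X³Y¹⁷/Y¹⁰` and `v = X⁴Y¹⁶/Y¹⁰` of
`Q(A)`. -/
theorem stmt19 (k : Type*) [Field k]
    (a b c d : subA k)
    (ha : (a : MvPolynomial (Fin 2) k) = X 1 ^ 10)
    (hb : (b : MvPolynomial (Fin 2) k) = X 0 ^ 5)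
    (hc : (c : MvPolynomial (Fin 2) k) = X 0 ^ 3 * X 1 ^ 17)
    (hd : (d : MvPolynomial (Fin 2) k) = X 0 ^ 4 * X 1 ^ 16) :
    (Ideal.span {a}).colon (Ideal.span {b}) = (Ideal.span {a}).colon (Ideal.span {b ^ 2}) ∧
    (Ideal.span {a}).colon (Ideal.span {b}) = Ideal.span {a, c, d} ∧
    ∀ u v : FractionRing (subA k),
      algebraMap (subA k) (FractionRing (subA k)) a * u =
        algebraMap (subA k) (FractionRing (subA k)) c →
      algebraMap (subA k) (FractionRing (subA k)) a * v =
        algebraMap (subA k) (FractionRing (subA k)) d →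
      ({f | ∃ r : subA k, algebraMap (subA k) (FractionRing (subA k)) a * f =
          algebraMap (subA k) (FractionRing (subA k)) r} ∩
        {f | ∃ r : subA k, algebraMap (subA k) (FractionRing (subA k)) b * f =
          algebraMap (subA k) (FractionRing (subA k)) r} =
        (Algebra.adjoin (subA k) {u, v} : Set (FractionRing (subA k)))) ∧
      ∀ p q r : subA k, (p : MvPolynomial (Fin 2) k) = X 0 ^ 5 →
        (q : MvPolynomial (Fin 2) k) = X 0 * X 1 ^ 4 →
        (r : MvPolynomial (Fin 2) k) = X 1 ^ 5 →
        letI : Algebra k (FractionRing (subA k)) :=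
          ((algebraMap (subA k) (FractionRing (subA k))).comp
            (algebraMap k (subA k))).toAlgebra
        (Algebra.adjoin (subA k) {u, v} : Set (FractionRing (subA k))) =
          (Algebra.adjoin k
            {algebraMap (subA k) (FractionRing (subA k)) p,
             algebraMap (subA k) (FractionRing (subA k)) q,
             algebraMap (subA k) (FractionRing (subA k)) r, u, v} :
            Set (FractionRing (subA k))) := by
  have hsq : (Ideal.span {a}).colon (Ideal.span {b}) ≤
      (Ideal.span {a}).colon (Ideal.span {b ^ 2}) :=
    Submodule.colon_mono le_rfl
      (Ideal.span_singleton_le_span_singleton.2 (dvd_pow_self b two_ne_zero))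
  have hcolon : (Ideal.span {a}).colon (Ideal.span {b}) = Ideal.span {a, c, d} :=
    le_antisymm (hsq.trans (colon_sq_le_span ha hb hc hd)) (span_le_colon ha hb hc hd)
  have ha0 : a ≠ 0 := by
    rintro rfl
    exact pow_ne_zero 10 (X_ne_zero 1) ha.symm
  have ha' : algebraMap (subA k) (FractionRing (subA k)) a ≠ 0 :=
    (map_ne_zero_iff _ (IsFractionRing.injective _ _)).2 ha0
  refine ⟨le_antisymm hsq (hcolon ▸ colon_sq_le_span ha hb hc hd), hcolon,
    fun u v hu hv => ⟨?_, fun p q r hp hq hr => ?_⟩⟩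
  · rw [inter_setOf_mul_eq_colon ha0, hcolon, setOf_mul_mem_span_insert_eq_span ha' (s := {c, d})
      (t := {u, v}) (by simp only [Set.image_pair, hu, hv]),
      ← Algebra.adjoin_toSubmodule_eq_span_insert_one (mul_mem_span_insert_one ha hc hd ha' hu hv)]
    rfl
  · let _ : Algebra k (FractionRing (subA k)) :=
      ((algebraMap (subA k) (FractionRing (subA k))).comp (algebraMap k (subA k))).toAlgebra
    -- `FractionRing` carries its own `SMul k`; the tower is needed for the one of this algebra
    have : @IsScalarTower k (subA k) (FractionRing (subA k)) _ _ Algebra.toSMul :=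
      IsScalarTower.of_algebraMap_eq' rfl
    exact congrArg SetLike.coe
      (restrictScalars_adjoin_eq_adjoin ha hc hd hp hq hr ha' hu hv)
end
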